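/- arXiv:math/0611339 — 8 statements merged into one kernel-verified Lean document; each statement's English description precedes it below -/
import Mathlib

section
/- Let ξ_k = z_k² for an i.i.d. sequence (z_k)_{k∈ℤ}, let p ∈ (0,1], and suppose A_p μ_p < 1 (where A_p = Σ_{j≥1} a_j^p and μ_p = E[ξ_0^p]). Then the [0,∞]-valued random variable S_0 = a_0 + a_0 Σ_{k=1}^∞ Σ_{j_1,…,j_k ≥ 1} a_{j_1}⋯a_{j_k} ξ_{−j_1} ξ_{−j_1−j_2} ⋯ ξ_{−j_1−⋯−j_k} satisfies E[S_0^p] ≤ a_0^p / (1 − A_p μ_p). -/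
open MeasureTheory ProbabilityTheory Filter ENNReal

noncomputable section

variable {Ω : Type*}

/-- `(z k)_{k ∈ ℤ}` is an i.i.d. sequence of real random variables. -/
def IsIIDSeq [MeasurableSpace Ω] (P : Measure Ω) (z : ℤ → Ω → ℝ) : Prop :=
  (∀ k, Measurable (z k)) ∧ iIndepFun z P ∧
    ∀ k, P.map (z k) = P.map (z 0)

/-- The σ-algebra generated by `(z k : k ≤ n)`. -/
def pastFiltration [MeasurableSpace Ω] (z : ℤ → Ω → ℝ) (n : ℤ) : MeasurableSpace Ω :=
  ⨆ k ∈ Set.Iic n, MeasurableSpace.comap (z k) inferInstance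

/-- A solution is causal if `σ n` is measurable w.r.t. the σ-algebra generated by
`(z k : k ≤ n - 1)`. -/
def IsCausal [MeasurableSpace Ω] (z σ' : ℤ → Ω → ℝ) : Prop :=
  ∀ n : ℤ, Measurable[pastFiltration z (n - 1)] (σ' n)

/-- Strict stationarity: the law of the shifted sequence does not depend on the shift. -/
def IsStrictlyStationary [MeasurableSpace Ω] (P : Measure Ω) (X : ℤ → Ω → ℝ) : Prop :=
  ∀ n : ℤ, P.map (fun ω (k : ℤ) => X (n + k) ω) = P.map (fun ω (k : ℤ) => X k ω)

/-- `A_p = Σ_{j ≥ 1} a_j ^ p`, computed in `[0,∞]`. -/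
def Acoef (a : ℕ → ℝ) (p : ℝ) : ℝ≥0∞ :=
  ∑' j : ℕ+, ENNReal.ofReal ((a j) ^ p)

/-- `μ_p = E[|z_0|^{2p}]`, computed in `[0,∞]`. -/
def muMom [MeasurableSpace Ω] (P : Measure Ω) (z0 : Ω → ℝ) (p : ℝ) : ℝ≥0∞ :=
  ∫⁻ ω, ENNReal.ofReal (|z0 ω| ^ (2 * p)) ∂P

/-- The Volterra chaos expansion
`S_n = a_0 + a_0 Σ_{k=1}^∞ Σ_{j_1,…,j_k ≥ 1} a_{j_1}⋯a_{j_k} z_{n−j_1}² ⋯ z_{n−j_1−⋯−j_k}²`,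
with values in `[0,∞]`. -/
def chaosS [MeasurableSpace Ω] (a : ℕ → ℝ) (z : ℤ → Ω → ℝ) (n : ℤ) (ω : Ω) : ℝ≥0∞ :=
  ENNReal.ofReal (a 0) + ENNReal.ofReal (a 0) *
    ∑' (k : ℕ) (j : Fin (k + 1) → ℕ+),
      ∏ i : Fin (k + 1),
        ENNReal.ofReal (a (j i)) *
          ENNReal.ofReal ((z (n - ∑ l ∈ Finset.Iic i, (j l : ℤ)) ω) ^ 2)

/-- `(X, σ)` solves the ARCH(∞) equations `X_n = σ_n z_n`,
`σ_n² = a_0 + Σ_{j≥1} a_j X_{n-j}²` (a.s., the series being a sum of nonnegative terms,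
computed in `[0,∞]`), with `σ_n ≥ 0`. -/
def SolvesARCH [MeasurableSpace Ω] (P : Measure Ω) (a : ℕ → ℝ) (z X σ' : ℤ → Ω → ℝ) : Prop :=
  (∀ n ω, 0 ≤ σ' n ω) ∧
  (∀ n : ℤ, ∀ᵐ ω ∂P, X n ω = σ' n ω * z n ω) ∧
  (∀ n : ℤ, ∀ᵐ ω ∂P, ENNReal.ofReal ((σ' n ω) ^ 2)
      = ENNReal.ofReal (a 0)
        + ∑' j : ℕ+, ENNReal.ofReal (a j) * ENNReal.ofReal ((X (n - j) ω) ^ 2))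

lemma finset_rpow_sum_le {ι : Type*} (s : Finset ι) (f : ι → ℝ≥0∞) {p : ℝ}
    (hp0 : 0 < p) (hp1 : p ≤ 1) : (∑ i ∈ s, f i) ^ p ≤ ∑ i ∈ s, f i ^ p := by
  induction s using Finset.cons_induction with
  | empty => simp [ENNReal.zero_rpow_of_pos hp0]
  | cons i s hi ih =>
    rw [Finset.sum_cons, Finset.sum_cons]
    exact le_trans (ENNReal.rpow_add_le_add_rpow _ _ hp0.le hp1) (add_le_add le_rfl ih)

lemma rpow_tsum_le {ι : Type*} [Countable ι] (f : ι → ℝ≥0∞) {p : ℝ}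
    (hp0 : 0 < p) (hp1 : p ≤ 1) : (∑' i, f i) ^ p ≤ ∑' i, f i ^ p := by
  have hnz : p ≠ 0 := hp0.ne'
  have h1 : ∑' i, f i ≤ (∑' i, f i ^ p) ^ (1 / p) := by
    refine Summable.tsum_le_of_sum_le ENNReal.summable fun s => ?_
    calc ∑ i ∈ s, f i = ((∑ i ∈ s, f i) ^ p) ^ (1 / p) := by
          rw [← ENNReal.rpow_mul, mul_one_div, div_self hnz, ENNReal.rpow_one]
      _ ≤ (∑' i, f i ^ p) ^ (1 / p) :=
          ENNReal.rpow_le_rpow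
            (le_trans (finset_rpow_sum_le s f hp0 hp1) (ENNReal.sum_le_tsum s))
            (by positivity)
  calc (∑' i, f i) ^ p ≤ (((∑' i, f i ^ p)) ^ (1 / p)) ^ p := ENNReal.rpow_le_rpow h1 hp0.le
    _ = ∑' i, f i ^ p := by rw [← ENNReal.rpow_mul, one_div, inv_mul_cancel₀ hnz, ENNReal.rpow_one]

lemma lintegral_prod_of_indep {Ω ι : Type*} [MeasurableSpace Ω] {P : Measure Ω}
    [IsProbabilityMeasure P] {f : ι → Ω → ℝ≥0∞} (hmeas : ∀ i, Measurable (f i))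
    (hindep : iIndepFun f P) (s : Finset ι) :
    ∫⁻ ω, ∏ i ∈ s, f i ω ∂P = ∏ i ∈ s, ∫⁻ ω, f i ω ∂P := by
  induction s using Finset.cons_induction with
  | empty => simp
  | cons i s hi ih =>
    simp only [Finset.prod_cons]
    rw [← ih]
    have hg : Measurable (∏ j ∈ s, f j) := by
      simpa [Finset.prod_fn] using Finset.measurable_prod s fun j _ => hmeas j
    have h := lintegral_mul_eq_lintegral_mul_lintegral_of_indepFun (hmeas i) hg
      (hindep.indepFun_finsetProd_of_notMem hmeas hi).symm
    simpa [Finset.prod_apply] using h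

lemma tsum_pi_prod (k : ℕ) (c : ℕ+ → ℝ≥0∞) :
    ∑' j : Fin (k+1) → ℕ+, ∏ i, c (j i) = (∑' x : ℕ+, c x) ^ (k+1) := by
  induction k with
  | zero =>
    rw [pow_one, ← (Equiv.funUnique (Fin 1) ℕ+).symm.tsum_eq]
    simp [Equiv.funUnique]
  | succ k ih =>
    rw [← (Fin.consEquiv (fun _ : Fin (k+2) => ℕ+)).tsum_eq]
    simp only [Fin.consEquiv_apply, Fin.prod_univ_succ, Fin.cons_zero, Fin.cons_succ]
    rw [ENNReal.tsum_prod']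
    calc (∑' (x : ℕ+) (j : Fin (k+1) → ℕ+), c x * (c (j 0) * ∏ i : Fin k, c (j i.succ)))
        = ∑' (x : ℕ+), c x * ∑' (j : Fin (k+1) → ℕ+), ∏ i : Fin (k+1), c (j i) := by
          refine tsum_congr fun x => ?_
          rw [← ENNReal.tsum_mul_left]
          exact tsum_congr fun j => by rw [Fin.prod_univ_succ]
      _ = (∑' x, c x) ^ (k+1+1) := by rw [ENNReal.tsum_mul_right, ih, ← pow_succ']

/-- Bound (7) in the proof of Theorem 1: if `p ∈ (0,1]` and `A_p μ_p < 1`, then the `[0,∞]`-valued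
chaos expansion `S_0` satisfies `E[S_0^p] ≤ a_0^p / (1 − A_p μ_p)`. -/
theorem chaosS_moment_bound [MeasurableSpace Ω] (P : Measure Ω) [IsProbabilityMeasure P]
    (z : ℤ → Ω → ℝ) (hz : IsIIDSeq P z)
    (a : ℕ → ℝ) (ha0 : 0 < a 0) (ha : ∀ j : ℕ+, 0 ≤ a j)
    (p : ℝ) (hp0 : 0 < p) (hp1 : p ≤ 1)
    (hcontr : Acoef a p * muMom P (z 0) p < 1) :
    (∫⁻ ω, (chaosS a z 0 ω) ^ p ∂P)
      ≤ ENNReal.ofReal ((a 0) ^ p) / (1 - Acoef a p * muMom P (z 0) p) := by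
  obtain ⟨hzm, hzi, hzd⟩ := hz
  set g : ℝ → ℝ≥0∞ := fun x => ENNReal.ofReal (|x| ^ (2 * p)) with hgdef
  have hgm : Measurable g := ENNReal.measurable_ofReal.comp (measurable_abs.pow_const _)
  set ξ : ℤ → Ω → ℝ≥0∞ := fun m ω => g (z m ω) with hξdef
  have hξm : ∀ m, Measurable (ξ m) := fun m => hgm.comp (hzm m)
  have hξi : iIndepFun ξ P := hzi.comp (fun _ => g) (fun _ => hgm)
  set μ := muMom P (z 0) p with hμdef
  have hmom : ∀ m : ℤ, ∫⁻ ω, ξ m ω ∂P = μ := by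
    intro m
    calc ∫⁻ ω, g (z m ω) ∂P = ∫⁻ x, g x ∂(P.map (z m)) := (lintegral_map hgm (hzm m)).symm
      _ = ∫⁻ x, g x ∂(P.map (z 0)) := by rw [hzd m]
      _ = ∫⁻ ω, g (z 0 ω) ∂P := lintegral_map hgm (hzm 0)
      _ = μ := rfl
  have hxi_eq : ∀ (m : ℤ) (ω : Ω), (ENNReal.ofReal ((z m ω) ^ 2)) ^ p = ξ m ω := by
    intro m ω
    rw [ENNReal.ofReal_rpow_of_nonneg (sq_nonneg _) hp0.le]
    simp only [hξdef, hgdef]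
    congr 1
    rw [← sq_abs (z m ω), ← Real.rpow_natCast |z m ω| 2, ← Real.rpow_mul (abs_nonneg _)]
    norm_num
  set c : ℕ+ → ℝ≥0∞ := fun x => ENNReal.ofReal (a x) ^ p with hcdef
  -- injectivity of index maps
  have hinj : ∀ (k : ℕ) (j : Fin (k+1) → ℕ+),
      Function.Injective (fun i : Fin (k+1) => (0 : ℤ) - ∑ l ∈ Finset.Iic i, (j l : ℤ)) := by
    intro k j
    have hs : StrictMono (fun i : Fin (k+1) => ∑ l ∈ Finset.Iic i, (j l : ℤ)) := by
      intro i i' hii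
      refine Finset.sum_lt_sum_of_subset
        (fun l hl => Finset.mem_Iic.2 (le_trans (Finset.mem_Iic.1 hl) hii.le))
        (Finset.mem_Iic.2 le_rfl) (fun h => absurd (Finset.mem_Iic.1 h) (not_le.2 hii)) ?_ ?_
      · exact_mod_cast (j i').pos
      · intro l _ _; positivity
    intro i i' h
    apply hs.injective
    simp only [zero_sub, neg_inj] at h
    exact h
  -- pointwise bound
  have hpt : ∀ ω, (chaosS a z 0 ω) ^ p ≤ ENNReal.ofReal (a 0 ^ p) + ENNReal.ofReal (a 0 ^ p) *
      ∑' (k : ℕ) (j : Fin (k+1) → ℕ+),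
        ∏ i : Fin (k+1), c (j i) * ξ (0 - ∑ l ∈ Finset.Iic i, (j l : ℤ)) ω := by
    intro ω
    unfold chaosS
    refine le_trans (ENNReal.rpow_add_le_add_rpow _ _ hp0.le hp1) ?_
    rw [ENNReal.mul_rpow_of_nonneg _ _ hp0.le,
      ENNReal.ofReal_rpow_of_nonneg ha0.le hp0.le]
    refine add_le_add le_rfl (mul_le_mul_right ?_ _)
    refine le_trans (rpow_tsum_le _ hp0 hp1) ?_
    refine ENNReal.tsum_le_tsum fun k => ?_
    refine le_trans (rpow_tsum_le _ hp0 hp1) ?_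
    refine ENNReal.tsum_le_tsum fun j => ?_
    rw [← ENNReal.prod_rpow_of_nonneg hp0.le]
    refine le_of_eq (Finset.prod_congr rfl fun i _ => ?_)
    rw [ENNReal.mul_rpow_of_nonneg _ _ hp0.le, hxi_eq]
  -- measurability of summands
  have htermmeas : ∀ (k : ℕ) (j : Fin (k+1) → ℕ+), Measurable (fun ω =>
      ∏ i : Fin (k+1), c (j i) * ξ (0 - ∑ l ∈ Finset.Iic i, (j l : ℤ)) ω) :=
    fun k j => Finset.measurable_prod _ fun i _ => (hξm _).const_mul _
  have hSmeas : ∀ k : ℕ, Measurable (fun ω => ∑' j : Fin (k+1) → ℕ+,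
      ∏ i : Fin (k+1), c (j i) * ξ (0 - ∑ l ∈ Finset.Iic i, (j l : ℤ)) ω) :=
    fun k => Measurable.ennreal_tsum fun j => htermmeas k j
  -- value of each term's integral
  have hterm : ∀ (k : ℕ) (j : Fin (k+1) → ℕ+),
      ∫⁻ ω, ∏ i : Fin (k+1), c (j i) * ξ (0 - ∑ l ∈ Finset.Iic i, (j l : ℤ)) ω ∂P
        = ∏ i : Fin (k+1), (c (j i) * μ) := by
    intro k j
    have h1 : ∀ ω, ∏ i : Fin (k+1), c (j i) * ξ (0 - ∑ l ∈ Finset.Iic i, (j l : ℤ)) ω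
        = (∏ i : Fin (k+1), c (j i)) *
          ∏ t ∈ Finset.image (fun i : Fin (k+1) => (0:ℤ) - ∑ l ∈ Finset.Iic i, (j l : ℤ))
            Finset.univ, ξ t ω := by
      intro ω
      rw [Finset.prod_mul_distrib, Finset.prod_image (fun i _ i' _ h => hinj k j h)]
    simp_rw [h1]
    rw [lintegral_const_mul _ (Finset.measurable_prod _ fun t _ => hξm t),
      lintegral_prod_of_indep hξm hξi,
      Finset.prod_image (fun i _ i' _ h => hinj k j h)]
    simp_rw [hmom]
    rw [Finset.prod_mul_distrib]
  have hsum : ∀ k : ℕ, (∑' j : Fin (k+1) → ℕ+, ∏ i : Fin (k+1), (c (j i) * μ))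
      = (Acoef a p * μ) ^ (k+1) := by
    intro k
    rw [tsum_pi_prod k (fun x => c x * μ), ENNReal.tsum_mul_right]
    have hAc : (∑' i : ℕ+, c i) = Acoef a p :=
      tsum_congr fun x => ENNReal.ofReal_rpow_of_nonneg (ha x) hp0.le
    rw [hAc]
  set r := Acoef a p * μ with hrdef
  have hr1 : r < 1 := hcontr
  have h1r : (1 : ℝ≥0∞) - r ≠ 0 := by
    exact fun h => absurd (tsub_eq_zero_iff_le.1 h) (not_le.2 hr1)
  have h1rt : (1 : ℝ≥0∞) - r ≠ ⊤ := ne_top_of_le_ne_top one_ne_top tsub_le_self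
  calc ∫⁻ ω, (chaosS a z 0 ω) ^ p ∂P
      ≤ ∫⁻ ω, (ENNReal.ofReal (a 0 ^ p) + ENNReal.ofReal (a 0 ^ p) *
          ∑' (k : ℕ) (j : Fin (k+1) → ℕ+),
            ∏ i : Fin (k+1), c (j i) * ξ (0 - ∑ l ∈ Finset.Iic i, (j l : ℤ)) ω) ∂P :=
        lintegral_mono hpt
    _ = ENNReal.ofReal (a 0 ^ p) + ENNReal.ofReal (a 0 ^ p) *
          ∑' (k : ℕ), ∫⁻ ω, (∑' j : Fin (k+1) → ℕ+,
            ∏ i : Fin (k+1), c (j i) * ξ (0 - ∑ l ∈ Finset.Iic i, (j l : ℤ)) ω) ∂P := by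
        rw [lintegral_add_left measurable_const, lintegral_const, measure_univ, mul_one,
          lintegral_const_mul _ (Measurable.ennreal_tsum hSmeas),
          lintegral_tsum fun k => (hSmeas k).aemeasurable]
    _ = ENNReal.ofReal (a 0 ^ p) + ENNReal.ofReal (a 0 ^ p) * ∑' (k : ℕ), r ^ (k+1) := by
        congr 1
        congr 1
        refine tsum_congr fun k => ?_
        rw [lintegral_tsum fun j => (htermmeas k j).aemeasurable]
        rw [← hsum k]
        exact tsum_congr fun j => hterm k j
    _ = ENNReal.ofReal (a 0 ^ p) + ENNReal.ofReal (a 0 ^ p) * (r * (1 - r)⁻¹) := by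
        rw [ENNReal.tsum_geometric_add_one]
    _ = ENNReal.ofReal (a 0 ^ p) * (((1 - r) + r) * (1 - r)⁻¹) := by
        rw [add_mul, mul_add, ENNReal.mul_inv_cancel h1r h1rt, mul_one]
    _ = ENNReal.ofReal (a 0 ^ p) * (1 - r)⁻¹ := by
        rw [tsub_add_cancel_of_le hr1.le, one_mul]
    _ = ENNReal.ofReal (a 0 ^ p) / (1 - r) := rfl
end
end

section
/- Let ξ_k = z_k² for an i.i.d. sequence (z_k)_{k∈ℤ}, and suppose there exists p ∈ (0,1] with A_p μ_p < 1 (where A_p = Σ_{j≥1} a_j^p and μ_p = E[ξ_0^p]). Then for every n ∈ ℤ the random variable S_n = a_0 + a_0 Σ_{k=1}^∞ Σ_{j_1,…,j_k ≥ 1} a_{j_1}⋯a_{j_k} ξ_{n−j_1} ξ_{n−j_1−j_2} ⋯ ξ_{n−j_1−⋯−j_k} is almost surely finite. -/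
open MeasureTheory ProbabilityTheory Filter ENNReal

noncomputable section

variable {Ω : Type*}

lemma aux_finset_rpow_le {ι : Type*} (f : ι → ℝ≥0∞) {p : ℝ} (hp : 0 < p) (hp1 : p ≤ 1)
    (s : Finset ι) : (∑ i ∈ s, f i) ^ p ≤ ∑ i ∈ s, f i ^ p := by
  classical
  induction s using Finset.induction_on with
  | empty => simp [ENNReal.zero_rpow_of_pos hp]
  | @insert _ _ h ih =>
      rw [Finset.sum_insert h, Finset.sum_insert h]
      exact le_trans (ENNReal.rpow_add_le_add_rpow _ _ hp.le hp1) (add_le_add le_rfl ih)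

lemma aux_rpow_tsum_le {ι : Type*} (f : ι → ℝ≥0∞) {p : ℝ} (hp : 0 < p) (hp1 : p ≤ 1) :
    (∑' i, f i) ^ p ≤ ∑' i, f i ^ p := by
  have h1 : ∑' i, f i ≤ (∑' i, f i ^ p) ^ (1 / p) := by
    rw [ENNReal.tsum_eq_iSup_sum]
    refine iSup_le fun s => ?_
    calc ∑ i ∈ s, f i = ((∑ i ∈ s, f i) ^ p) ^ (1 / p) := by
          rw [← ENNReal.rpow_mul, mul_one_div, div_self hp.ne', ENNReal.rpow_one]
      _ ≤ (∑ i ∈ s, f i ^ p) ^ (1 / p) :=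
          ENNReal.rpow_le_rpow (aux_finset_rpow_le f hp hp1 s) (by positivity)
      _ ≤ _ := ENNReal.rpow_le_rpow (ENNReal.sum_le_tsum s) (by positivity)
  calc (∑' i, f i) ^ p ≤ (((∑' i, f i ^ p) ^ (1 / p))) ^ p := ENNReal.rpow_le_rpow h1 hp.le
    _ = _ := by rw [← ENNReal.rpow_mul, one_div_mul_cancel hp.ne', ENNReal.rpow_one]

lemma aux_lintegral_prod {Ω : Type*} [MeasurableSpace Ω] {P : Measure Ω} [IsProbabilityMeasure P]
    {g : ℤ → Ω → ℝ≥0∞} (hind : iIndepFun g P)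
    (hm : ∀ t, Measurable (g t)) (s : Finset ℤ) :
    ∫⁻ ω, ∏ t ∈ s, g t ω ∂P = ∏ t ∈ s, ∫⁻ ω, g t ω ∂P := by
  classical
  induction s using Finset.induction_on with
  | empty => simp
  | @insert i s h ih =>
      have hindep : IndepFun (g i) (∏ t ∈ s, g t) P :=
        (hind.indepFun_finsetProd_of_notMem hm h).symm
      have hprod : Measurable (fun ω => ∏ t ∈ s, g t ω) :=
        Finset.measurable_prod s fun t _ => hm t
      simp_rw [Finset.prod_insert h]
      rw [lintegral_mul_eq_lintegral_mul_lintegral_of_indepFun'' (hm i).aemeasurable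
          hprod.aemeasurable (by
            have : (∏ t ∈ s, g t) = fun ω => ∏ t ∈ s, g t ω := by
              ext ω; simp
            rw [this] at hindep; exact hindep), ih]

lemma aux_tsum_pi (b : ℕ+ → ℝ≥0∞) : ∀ k : ℕ,
    ∑' j : Fin (k + 1) → ℕ+, ∏ i, b (j i) = (∑' m, b m) ^ (k + 1) := by
  intro k
  induction k with
  | zero =>
      rw [← (Equiv.funUnique (Fin 1) ℕ+).symm.tsum_eq]
      simp
  | succ k ih =>
      have key : ∑' q : ℕ+ × (Fin (k + 1) → ℕ+), ∏ i, b ((Fin.consEquiv fun _ => ℕ+) q i)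
          = ∑' j : Fin (k + 2) → ℕ+, ∏ i, b (j i) :=
        (Fin.consEquiv (fun _ => ℕ+)).tsum_eq (fun j => ∏ i, b (j i))
      rw [← key]
      have h2 : ∀ q : ℕ+ × (Fin (k + 1) → ℕ+),
          (∏ i, b ((Fin.consEquiv fun _ => ℕ+) q i)) = b q.1 * ∏ i, b (q.2 i) := by
        intro q
        simp only [Fin.consEquiv_apply]
        rw [Fin.prod_univ_succ]
        simp
      calc ∑' q : ℕ+ × (Fin (k + 1) → ℕ+), ∏ i, b ((Fin.consEquiv fun _ => ℕ+) q i)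
          = ∑' q : ℕ+ × (Fin (k + 1) → ℕ+), b q.1 * ∏ i, b (q.2 i) := tsum_congr h2
        _ = ∑' (m : ℕ+) (j : Fin (k + 1) → ℕ+), b m * ∏ i, b (j i) :=
            ENNReal.tsum_prod (f := fun (m : ℕ+) (j : Fin (k + 1) → ℕ+) => b m * ∏ i, b (j i))
        _ = (∑' m, b m) * ∑' j : Fin (k + 1) → ℕ+, ∏ i, b (j i) := by
            simp_rw [ENNReal.tsum_mul_left, ENNReal.tsum_mul_right]
        _ = (∑' m, b m) ^ (k + 2) := by rw [ih]; ring
/-- If `A_p μ_p < 1` for some `p ∈ (0,1]`, then for every `n ∈ ℤ` the `[0,∞]`-valued chaos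
expansion `S_n` is almost surely finite. -/

theorem chaosS_ae_finite [MeasurableSpace Ω] (P : Measure Ω) [IsProbabilityMeasure P]
    (z : ℤ → Ω → ℝ) (hz : IsIIDSeq P z)
    (a : ℕ → ℝ) (ha0 : 0 < a 0) (ha : ∀ j : ℕ+, 0 ≤ a j)
    (hcontr : ∃ p : ℝ, 0 < p ∧ p ≤ 1 ∧ Acoef a p * muMom P (z 0) p < 1) :
    ∀ n : ℤ, ∀ᵐ ω ∂P, chaosS a z n ω < ⊤ := by
  obtain ⟨p, hp, hp1, hr⟩ := hcontr
  obtain ⟨hzm, hzi, hzd⟩ := hz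
  intro n
  set μp := muMom P (z 0) p with hμp
  set r : ℝ≥0∞ := Acoef a p * μp with hrdef
  set g : ℤ → Ω → ℝ≥0∞ := fun t ω => (ENNReal.ofReal ((z t ω) ^ 2)) ^ p with hg
  have hφm : Measurable (fun x : ℝ => (ENNReal.ofReal (x ^ 2)) ^ p) :=
    ENNReal.continuous_rpow_const.measurable.comp
      (ENNReal.measurable_ofReal.comp (measurable_id.pow_const 2))
  have hgm : ∀ t, Measurable (g t) := fun t => hφm.comp (hzm t)
  have hgi : iIndepFun g P :=
    hzi.comp (fun _ x => (ENNReal.ofReal (x ^ 2)) ^ p) (fun _ => hφm)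
  have hpt : ∀ x : ℝ, (ENNReal.ofReal (x ^ 2)) ^ p = ENNReal.ofReal (|x| ^ (2 * p)) := by
    intro x
    rw [ENNReal.ofReal_rpow_of_nonneg (sq_nonneg x) hp.le]
    congr 1
    rw [← sq_abs, ← Real.rpow_two, ← Real.rpow_mul (abs_nonneg x)]
  have hψ : Measurable (fun x : ℝ => ENNReal.ofReal (|x| ^ (2 * p))) := by
    apply ENNReal.measurable_ofReal.comp
    exact (Real.continuous_rpow_const (by positivity)).measurable.comp measurable_abs
  have hgint : ∀ t : ℤ, ∫⁻ ω, g t ω ∂P = μp := by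
    intro t
    calc ∫⁻ ω, g t ω ∂P = ∫⁻ ω, ENNReal.ofReal (|z t ω| ^ (2 * p)) ∂P := by
          simp only [hg, hpt]
      _ = ∫⁻ x, ENNReal.ofReal (|x| ^ (2 * p)) ∂(P.map (z t)) := (lintegral_map hψ (hzm t)).symm
      _ = ∫⁻ x, ENNReal.ofReal (|x| ^ (2 * p)) ∂(P.map (z 0)) := by rw [hzd t]
      _ = μp := by rw [lintegral_map hψ (hzm 0)]; rfl
  set F : (k : ℕ) → (Fin (k + 1) → ℕ+) → Ω → ℝ≥0∞ := fun k j ω =>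
    ∏ i, ENNReal.ofReal (a (j i)) *
      ENNReal.ofReal ((z (n - ∑ l ∈ Finset.Iic i, (j l : ℤ)) ω) ^ 2) with hF
  have hFm : ∀ k j, Measurable (F k j) := fun k j =>
    Finset.measurable_prod _ fun i _ =>
      measurable_const.mul (ENNReal.measurable_ofReal.comp ((hzm _).pow_const 2))
  have hFpm : ∀ k j, Measurable (fun ω => (F k j ω) ^ p) := fun k j =>
    ENNReal.continuous_rpow_const.measurable.comp (hFm k j)
  -- lintegral of each term
  have hFp : ∀ (k : ℕ) (j : Fin (k + 1) → ℕ+),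
      ∫⁻ ω, (F k j ω) ^ p ∂P = ∏ i : Fin (k + 1), (ENNReal.ofReal (a (j i) ^ p) * μp) := by
    intro k j
    set t : Fin (k + 1) → ℤ := fun i => n - ∑ l ∈ Finset.Iic i, (j l : ℤ) with ht
    have htinj : Function.Injective t := by
      have hmono : StrictMono (fun i : Fin (k + 1) => ∑ l ∈ Finset.Iic i, (j l : ℤ)) := by
        intro i i' hlt
        refine Finset.sum_lt_sum_of_subset (Finset.Iic_subset_Iic.mpr hlt.le)
          (Finset.mem_Iic.mpr le_rfl) (by simpa [Finset.mem_Iic] using hlt.not_ge)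
          (by exact_mod_cast (j i').pos) (fun l _ _ => by positivity)
      intro i i' hii
      have : (fun i : Fin (k + 1) => ∑ l ∈ Finset.Iic i, (j l : ℤ)) i
          = (fun i : Fin (k + 1) => ∑ l ∈ Finset.Iic i, (j l : ℤ)) i' := by
        have := sub_right_injective hii
        simpa using this
      exact hmono.injective this
    have hpw : ∀ ω, (F k j ω) ^ p
        = (∏ i : Fin (k + 1), ENNReal.ofReal (a (j i) ^ p)) * ∏ i : Fin (k + 1), g (t i) ω := by
      intro ω
      simp only [hF]
      rw [← ENNReal.prod_rpow_of_nonneg hp.le]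
      rw [← Finset.prod_mul_distrib]
      refine Finset.prod_congr rfl fun i _ => ?_
      rw [ENNReal.mul_rpow_of_nonneg _ _ hp.le,
        ENNReal.ofReal_rpow_of_nonneg (ha (j i)) hp.le]
    simp_rw [hpw]
    rw [lintegral_const_mul _ (Finset.measurable_prod _ fun i _ => hgm (t i))]
    have himg : ∀ ω, ∏ i : Fin (k + 1), g (t i) ω = ∏ u ∈ Finset.image t Finset.univ, g u ω :=
      fun ω => (Finset.prod_image (g := t) (f := fun u => g u ω)
        (fun x _ y _ h => htinj h)).symm
    simp_rw [himg]
    rw [aux_lintegral_prod hgi hgm]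
    have : ∏ u ∈ Finset.image t Finset.univ, ∫⁻ ω, g u ω ∂P = μp ^ (k + 1) := by
      rw [Finset.prod_congr rfl fun u _ => hgint u, Finset.prod_const,
        Finset.card_image_of_injective _ htinj]
      simp
    rw [this, Finset.prod_mul_distrib, Finset.prod_const]
    simp
  -- sum over j
  have hsum_j : ∀ k : ℕ,
      ∑' j : Fin (k + 1) → ℕ+, ∏ i : Fin (k + 1), (ENNReal.ofReal (a (j i) ^ p) * μp)
        = r ^ (k + 1) := by
    intro k
    rw [aux_tsum_pi (fun m => ENNReal.ofReal (a (m : ℕ) ^ p) * μp) k]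
    congr 1
    rw [ENNReal.tsum_mul_right]
    rfl
  -- the tail sum
  set T : Ω → ℝ≥0∞ := fun ω => ∑' (k : ℕ) (j : Fin (k + 1) → ℕ+), F k j ω with hT
  have hTm : Measurable T :=
    Measurable.ennreal_tsum fun k => Measurable.ennreal_tsum fun j => hFm k j
  have hint : ∫⁻ ω, (T ω) ^ p ∂P ≤ r * (1 - r)⁻¹ := by
    have step1 : ∀ ω, (T ω) ^ p ≤ ∑' (k : ℕ) (j : Fin (k + 1) → ℕ+), (F k j ω) ^ p := by
      intro ω
      refine le_trans (aux_rpow_tsum_le _ hp hp1) ?_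
      exact Summable.tsum_le_tsum (fun k => aux_rpow_tsum_le _ hp hp1) ENNReal.summable ENNReal.summable
    calc ∫⁻ ω, (T ω) ^ p ∂P
        ≤ ∫⁻ ω, ∑' (k : ℕ) (j : Fin (k + 1) → ℕ+), (F k j ω) ^ p ∂P := lintegral_mono step1
      _ = ∑' (k : ℕ) (j : Fin (k + 1) → ℕ+), ∫⁻ ω, (F k j ω) ^ p ∂P := by
          rw [lintegral_tsum fun k =>
            (Measurable.ennreal_tsum fun j => hFpm k j).aemeasurable]
          exact tsum_congr fun k => lintegral_tsum fun j => (hFpm k j).aemeasurable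
      _ = ∑' k : ℕ, r ^ (k + 1) := by
          refine tsum_congr fun k => ?_
          rw [tsum_congr (hFp k), hsum_j k]
      _ = r * (1 - r)⁻¹ := ENNReal.tsum_geometric_add_one r
  have hfin : ∫⁻ ω, (T ω) ^ p ∂P ≠ ⊤ := by
    refine ne_top_of_le_ne_top ?_ hint
    exact ENNReal.mul_ne_top (hr.trans_le le_top).ne
      (ENNReal.inv_ne_top.mpr (by simp [tsub_eq_zero_iff_le, hr.not_ge]))
  have hTae : ∀ᵐ ω ∂P, (T ω) ^ p < ⊤ :=
    ae_lt_top (ENNReal.continuous_rpow_const.measurable.comp hTm) hfin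
  filter_upwards [hTae] with ω hω
  have hTlt : T ω < ⊤ := by
    by_contra h
    rw [not_lt, top_le_iff] at h
    rw [h, ENNReal.top_rpow_of_pos hp] at hω
    exact absurd hω (lt_irrefl ⊤)
  have hEq : chaosS a z n ω = ENNReal.ofReal (a 0) + ENNReal.ofReal (a 0) * T ω := rfl
  rw [hEq]
  exact ENNReal.add_lt_top.mpr ⟨ENNReal.ofReal_lt_top, ENNReal.mul_lt_top ENNReal.ofReal_lt_top hTlt⟩
end
end

section
/- Let ξ_k = z_k² for an i.i.d. sequence (z_k)_{k∈ℤ}, and define for each n ∈ ℤ the [0,∞]-valued random variable S_n = a_0 + a_0 Σ_{k=1}^∞ Σ_{j_1,…,j_k ≥ 1} a_{j_1}⋯a_{j_k} ξ_{n−j_1} ξ_{n−j_1−j_2} ⋯ ξ_{n−j_1−⋯−j_k}. Then (S_n)_{n∈ℤ} satisfies the recurrence S_n = a_0 + Σ_{j≥1} a_j S_{n−j} ξ_{n−j} (as an identity in [0,∞], pointwise on the sample space). -/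
open MeasureTheory ProbabilityTheory Filter ENNReal

noncomputable section

variable {Ω : Type*}

private lemma Iic_succ_fin' {k : ℕ} (i : Fin (k+1)) :
    Finset.Iic i.succ = insert 0 ((Finset.Iic i).map (Fin.succEmb (k+1))) := by
  ext l
  simp only [Finset.mem_Iic, Finset.mem_insert, Finset.mem_map, Fin.succEmb]
  cases l using Fin.cases with
  | zero => simp
  | succ m =>
    simp only [Fin.succ_le_succ_iff, Function.Embedding.coeFn_mk]
    constructor
    · intro h; exact Or.inr ⟨m, h, rfl⟩
    · rintro (h | ⟨m', hm', h⟩)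
      · exact absurd h (Fin.succ_ne_zero m)
      · rwa [← Fin.succ_injective _ h]

private lemma sum_Iic_cons' {k : ℕ} (p : ℕ+) (j : Fin (k+1) → ℕ+) (i : Fin (k+1)) :
    ∑ l ∈ Finset.Iic i.succ, ((Fin.cons p j : Fin (k+2) → ℕ+) l : ℤ)
      = (p : ℤ) + ∑ l ∈ Finset.Iic i, (j l : ℤ) := by
  rw [Iic_succ_fin', Finset.sum_insert, Finset.sum_map]
  · simp [Fin.succEmb]
  · simp [Fin.succEmb, Fin.succ_ne_zero, eq_comm]

private lemma Iic_zero_fin' {k : ℕ} : Finset.Iic (0 : Fin (k+1)) = {0} := by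
  ext l; simp [Fin.le_zero_iff]

private lemma tsum_term_succ' (x : ℤ → ℝ≥0∞) (a : ℕ → ℝ) (n : ℤ) (k : ℕ) :
    ∑' j : Fin (k+2) → ℕ+, ∏ i : Fin (k+2),
        ENNReal.ofReal (a (j i)) * x (n - ∑ l ∈ Finset.Iic i, (j l : ℤ))
      = ∑' p : ℕ+, ENNReal.ofReal (a p) * x (n - p) *
          ∑' j : Fin (k+1) → ℕ+, ∏ i : Fin (k+1),
            ENNReal.ofReal (a (j i)) * x ((n - p) - ∑ l ∈ Finset.Iic i, (j l : ℤ)) := by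
  set F : (Fin (k+2) → ℕ+) → ℝ≥0∞ := fun j => ∏ i : Fin (k+2),
      ENNReal.ofReal (a (j i)) * x (n - ∑ l ∈ Finset.Iic i, (j l : ℤ)) with hF
  calc ∑' j, F j
      = ∑' c : ℕ+ × (Fin (k+1) → ℕ+), F (Fin.cons c.1 c.2) :=
        ((Fin.consEquiv (fun _ : Fin (k+2) => ℕ+)).tsum_eq F).symm
    _ = ∑' (p : ℕ+) (j : Fin (k+1) → ℕ+), F (Fin.cons p j) :=
        ENNReal.tsum_prod (f := fun p j => F (Fin.cons p j))
    _ = _ := by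
        refine tsum_congr fun p => ?_
        rw [← ENNReal.tsum_mul_left]
        refine tsum_congr fun j => ?_
        rw [hF]
        dsimp only
        conv_lhs => rw [Fin.prod_univ_succ]
        congr 1
        refine Finset.prod_congr rfl fun i _ => ?_
        rw [sum_Iic_cons', sub_add_eq_sub_sub, Fin.cons_succ]

/-- The chaos expansion satisfies the recurrence
`S_n = a_0 + Σ_{j≥1} a_j S_{n−j} ξ_{n−j}` pointwise, as an identity in `[0,∞]`,
where `ξ_k = z_k²`. -/
theorem chaosS_recurrence [MeasurableSpace Ω] (z : ℤ → Ω → ℝ)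
    (a : ℕ → ℝ) (ha0 : 0 < a 0) (ha : ∀ j : ℕ+, 0 ≤ a j) :
    ∀ (n : ℤ) (ω : Ω),
      chaosS a z n ω
        = ENNReal.ofReal (a 0)
          + ∑' j : ℕ+, ENNReal.ofReal (a j) * chaosS a z (n - j) ω
              * ENNReal.ofReal ((z (n - j) ω) ^ 2) := by
  intro n ω
  set x : ℤ → ℝ≥0∞ := fun m => ENNReal.ofReal ((z m ω) ^ 2) with hx
  set G : ℤ → ℕ → ℝ≥0∞ := fun m k => ∑' j : Fin (k+1) → ℕ+,
    ∏ i : Fin (k+1), ENNReal.ofReal (a (j i)) * x (m - ∑ l ∈ Finset.Iic i, (j l : ℤ)) with hG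
  have hchaos : ∀ m : ℤ, chaosS a z m ω
      = ENNReal.ofReal (a 0) + ENNReal.ofReal (a 0) * ∑' k : ℕ, G m k := fun m => rfl
  have hG0 : ∀ m : ℤ, G m 0 = ∑' p : ℕ+, ENNReal.ofReal (a p) * x (m - p) := by
    intro m
    rw [hG]
    dsimp only
    rw [← ((Equiv.funUnique (Fin 1) ℕ+).symm.tsum_eq
      (fun j : Fin 1 → ℕ+ => ∏ i : Fin 1,
        ENNReal.ofReal (a (j i)) * x (m - ∑ l ∈ Finset.Iic i, (j l : ℤ))))]
    refine tsum_congr fun p => ?_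
    rw [Fin.prod_univ_one]
    simp [Iic_zero_fin']
  have hGsucc : ∀ (m : ℤ) (k : ℕ),
      G m (k+1) = ∑' p : ℕ+, ENNReal.ofReal (a p) * x (m - p) * G (m - p) k := by
    intro m k
    exact tsum_term_succ' x a m k
  have hT : ∀ m : ℤ, (∑' k : ℕ, G m k)
      = ∑' p : ℕ+, (ENNReal.ofReal (a p) * x (m - p)
          + ENNReal.ofReal (a p) * x (m - p) * ∑' k : ℕ, G (m - p) k) := by
    intro m
    rw [tsum_eq_zero_add' ENNReal.summable, hG0]
    have : (∑' k : ℕ, G m (k+1))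
        = ∑' p : ℕ+, ENNReal.ofReal (a p) * x (m - p) * ∑' k : ℕ, G (m - p) k := by
      calc ∑' k : ℕ, G m (k+1)
          = ∑' (k : ℕ) (p : ℕ+), ENNReal.ofReal (a p) * x (m - p) * G (m - p) k :=
            tsum_congr fun k => hGsucc m k
        _ = ∑' (p : ℕ+) (k : ℕ), ENNReal.ofReal (a p) * x (m - p) * G (m - p) k :=
            ENNReal.tsum_comm
        _ = _ := tsum_congr fun p => ENNReal.tsum_mul_left
    rw [this, ← ENNReal.tsum_add]
  rw [hchaos n, hT n, ← ENNReal.tsum_mul_left]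
  congr 1
  refine tsum_congr fun p => ?_
  rw [hchaos (n - p)]
  ring
end
end

section
/- Suppose A_1 = 1 and μ_1 = 1. If there exists p ∈ (0,1] such that A_p μ_p < 1, then necessarily p < 1, and there exists p* < 1 such that A_{p*} < ∞ and Σ_{j≥1} a_j log(a_j) + E[z_0² log(z_0²)] ∈ (0, ∞]. -/
open MeasureTheory ProbabilityTheory Filter ENNReal

noncomputable section

variable {Ω : Type*}

/-- The condition `Σ_{j≥1} a_j log(a_j) + E[z_0² log(z_0²)] ∈ (0, ∞]`: either
`E[z_0² log(z_0²)] = ∞` (i.e. `z_0² log(z_0²)` is not integrable, its negative part being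
bounded), or the sum is finite and positive. -/
def EntropyPos [MeasurableSpace Ω] (P : Measure Ω) (z0 : Ω → ℝ) (a : ℕ → ℝ) : Prop :=
  ¬ Integrable (fun ω => z0 ω ^ 2 * Real.log (z0 ω ^ 2)) P ∨
    0 < (∑' j : ℕ+, a j * Real.log (a j)) + ∫ ω, z0 ω ^ 2 * Real.log (z0 ω ^ 2) ∂P

lemma tangent_le_rpow {t p : ℝ} (ht : 0 ≤ t) (hp0 : 0 < p) :
    t + (p - 1) * (t * Real.log t) ≤ t ^ p := by
  rcases eq_or_lt_of_le ht with h | h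
  · simp [← h, Real.zero_rpow hp0.ne']
  · have h1 : t ^ p = t * Real.exp ((p - 1) * Real.log t) := by
      rw [Real.rpow_def_of_pos h,
        show Real.log t * p = Real.log t + (p - 1) * Real.log t by ring, Real.exp_add,
        Real.exp_log h]
    have h2 : 1 + (p - 1) * Real.log t ≤ Real.exp ((p - 1) * Real.log t) := by
      have := Real.add_one_le_exp ((p - 1) * Real.log t); linarith
    calc t + (p - 1) * (t * Real.log t) = t * (1 + (p - 1) * Real.log t) := by ring
      _ ≤ t * Real.exp ((p - 1) * Real.log t) := mul_le_mul_of_nonneg_left h2 ht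
      _ = t ^ p := h1.symm

lemma abs_mul_log_le {t p : ℝ} (ht0 : 0 ≤ t) (ht1 : t ≤ 1) (hp0 : 0 < p) (hp1 : p < 1) :
    |t * Real.log t| ≤ t ^ p / (1 - p) := by
  have hq : 0 < 1 - p := by linarith
  rcases eq_or_lt_of_le ht0 with h | h
  · simp [← h, Real.zero_rpow hp0.ne']
  · have hlog : Real.log t ≤ 0 := Real.log_nonpos (le_of_lt h) ht1
    have habs : |t * Real.log t| = t * (-Real.log t) := by
      rw [abs_of_nonpos (mul_nonpos_of_nonneg_of_nonpos ht0 hlog)]; ring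
    rw [habs, le_div_iff₀ hq]
    have hs : (0:ℝ) < t ^ (1 - p) := Real.rpow_pos_of_pos h _
    have h1 : Real.log (t ^ (1 - p))⁻¹ ≤ (t ^ (1 - p))⁻¹ - 1 :=
      Real.log_le_sub_one_of_pos (by positivity)
    rw [Real.log_inv] at h1
    have h2 : t ^ (1 - p) * (-Real.log (t ^ (1 - p))) ≤ 1 := by
      have := mul_le_mul_of_nonneg_left h1 hs.le
      rw [mul_sub, mul_inv_cancel₀ hs.ne'] at this
      nlinarith
    rw [Real.log_rpow h] at h2
    have hsplit : t ^ p * t ^ (1 - p) = t := by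
      rw [← Real.rpow_add h]; norm_num
    calc t * (-Real.log t) * (1 - p)
        = (t ^ p * t ^ (1 - p)) * (-Real.log t) * (1 - p) := by rw [hsplit]
      _ = t ^ p * (t ^ (1 - p) * (-((1 - p) * Real.log t))) := by ring
      _ ≤ t ^ p * 1 := mul_le_mul_of_nonneg_left h2 (Real.rpow_nonneg ht0 _)
      _ = t ^ p := mul_one _

lemma log_split {c : ℝ} (x : ℝ) (hc : 0 ≤ c) :
    c * x ^ 2 * Real.log (c * x ^ 2)
      = c * Real.log c * x ^ 2 + c * (x ^ 2 * Real.log (x ^ 2)) := by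
  rcases eq_or_lt_of_le hc with h | h
  · simp [← h]
  rcases eq_or_ne x 0 with hx | hx
  · simp [hx]
  · rw [Real.log_mul h.ne' (pow_ne_zero 2 hx)]; ring


/-- Corollary 2, necessity: in the IARCH case `A_1 = 1`, `μ_1 = 1`, if `A_p μ_p < 1` for some
`p ∈ (0,1]`, then necessarily `p < 1`, and there exists `p* < 1` with `A_{p*} < ∞` and
`Σ_{j≥1} a_j log(a_j) + E[z_0² log(z_0²)] ∈ (0, ∞]`. -/
theorem iarch_entropy_necessary [MeasurableSpace Ω] (P : Measure Ω) [IsProbabilityMeasure P]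
    (z0 : Ω → ℝ) (hz0 : Measurable z0)
    (a : ℕ → ℝ) (ha : ∀ j : ℕ+, 0 ≤ a j)
    (hA1 : Acoef a 1 = 1) (hmu1 : muMom P z0 1 = 1)
    (p : ℝ) (hp0 : 0 < p) (hp1 : p ≤ 1)
    (hcontr : Acoef a p * muMom P z0 p < 1) :
    p < 1 ∧
      ∃ pstar : ℝ, pstar < 1 ∧ Acoef a pstar < ⊤ ∧
        Summable (fun j : ℕ+ => a j * Real.log (a j)) ∧ EntropyPos P z0 a := by
  -- exponent rewriting
  have hrw : ∀ (q : ℝ) (ω : Ω), |z0 ω| ^ (2 * q) = (z0 ω ^ 2) ^ q := by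
    intro q ω
    rw [Real.rpow_mul (abs_nonneg _), show ((2:ℝ) = ((2:ℕ):ℝ)) by norm_num,
      Real.rpow_natCast, sq_abs]
  have hmu1' : ∫⁻ ω, ENNReal.ofReal (z0 ω ^ 2) ∂P = 1 := by
    have : muMom P z0 1 = ∫⁻ ω, ENNReal.ofReal (z0 ω ^ 2) ∂P := by
      simp only [muMom, hrw, Real.rpow_one]
    rw [← this, hmu1]
  have hmup : muMom P z0 p = ∫⁻ ω, ENNReal.ofReal ((z0 ω ^ 2) ^ p) ∂P := by
    simp only [muMom, hrw]
  have hA1' : ∑' j : ℕ+, ENNReal.ofReal (a j) = 1 := by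
    have : Acoef a 1 = ∑' j : ℕ+, ENNReal.ofReal (a j) := by
      simp only [Acoef, Real.rpow_one]
    rw [← this, hA1]
  -- p < 1
  have hplt : p < 1 := by
    rcases lt_or_eq_of_le hp1 with h | h
    · exact h
    · subst h
      rw [hA1, hmu1, one_mul] at hcontr
      exact absurd hcontr (lt_irrefl 1)
  -- non-degeneracy
  have hAp_ne0 : Acoef a p ≠ 0 := by
    intro h0
    simp only [Acoef, ENNReal.tsum_eq_zero, ENNReal.ofReal_eq_zero] at h0
    have hz : ∀ j : ℕ+, a j = 0 := by
      intro j
      by_contra hne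
      have hpos : 0 < a j := lt_of_le_of_ne (ha j) (Ne.symm hne)
      exact absurd (h0 j) (not_le.mpr (Real.rpow_pos_of_pos hpos p))
    rw [show (∑' j : ℕ+, ENNReal.ofReal (a j)) = 0 from by simp [hz]] at hA1'
    exact zero_ne_one hA1'
  have hmup_ne0 : muMom P z0 p ≠ 0 := by
    intro h0
    rw [hmup] at h0
    have hmeasE : Measurable (fun ω => ENNReal.ofReal ((z0 ω ^ 2) ^ p)) := by fun_prop
    have hae := (lintegral_eq_zero_iff hmeasE).mp h0
    have hae2 : (fun ω => ENNReal.ofReal (z0 ω ^ 2)) =ᶠ[ae P] 0 := by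
      filter_upwards [hae] with ω hω
      simp only [Pi.zero_apply, ENNReal.ofReal_eq_zero] at hω ⊢
      by_contra hne
      push_neg at hne
      exact absurd hω (not_le.mpr (Real.rpow_pos_of_pos hne p))
    have h00 : ∫⁻ ω, ENNReal.ofReal (z0 ω ^ 2) ∂P = 0 :=
      (lintegral_eq_zero_iff (by fun_prop)).mpr hae2
    rw [hmu1'] at h00
    exact one_ne_zero h00
  have hAp_ne_top : Acoef a p ≠ ⊤ := by
    intro h0
    rw [h0, ENNReal.top_mul hmup_ne0] at hcontr
    exact absurd hcontr (by simp)
  have hmup_ne_top : muMom P z0 p ≠ ⊤ := by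
    intro h0
    rw [h0, ENNReal.mul_top hAp_ne0] at hcontr
    exact absurd hcontr (by simp)
  -- real summability facts
  have h1a : ∀ j : ℕ+, (ENNReal.ofReal (a j)).toReal = a j :=
    fun j => ENNReal.toReal_ofReal (ha j)
  have hsum_a : Summable (fun j : ℕ+ => a j) :=
    (ENNReal.summable_toReal (by rw [hA1']; exact ENNReal.one_ne_top)).congr h1a
  have hSa : ∑' j : ℕ+, a j = 1 := by
    calc ∑' j : ℕ+, a j = ∑' j : ℕ+, (ENNReal.ofReal (a j)).toReal := (tsum_congr h1a).symm
      _ = (∑' j : ℕ+, ENNReal.ofReal (a j)).toReal :=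
          (ENNReal.tsum_toReal_eq (fun j => ENNReal.ofReal_ne_top)).symm
      _ = 1 := by rw [hA1']; exact ENNReal.toReal_one
  have h1ap : ∀ j : ℕ+, (ENNReal.ofReal (a j ^ p)).toReal = a j ^ p :=
    fun j => ENNReal.toReal_ofReal (Real.rpow_nonneg (ha j) p)
  have hsum_ap : Summable (fun j : ℕ+ => a j ^ p) :=
    (ENNReal.summable_toReal hAp_ne_top).congr h1ap
  have hSap : ∑' j : ℕ+, a j ^ p = (Acoef a p).toReal := by
    calc ∑' j : ℕ+, a j ^ p = ∑' j : ℕ+, (ENNReal.ofReal (a j ^ p)).toReal :=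
          (tsum_congr h1ap).symm
      _ = (∑' j : ℕ+, ENNReal.ofReal (a j ^ p)).toReal :=
          (ENNReal.tsum_toReal_eq (fun j => ENNReal.ofReal_ne_top)).symm
      _ = (Acoef a p).toReal := rfl
  have haj_le1 : ∀ j : ℕ+, a j ≤ 1 := by
    intro j
    have h1 : ENNReal.ofReal (a j) ≤ 1 := by
      rw [← hA1']
      exact ENNReal.le_tsum j
    have := ENNReal.toReal_mono ENNReal.one_ne_top h1
    rwa [h1a j, ENNReal.toReal_one] at this
  have hsum_alog : Summable (fun j : ℕ+ => a j * Real.log (a j)) := by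
    apply Summable.of_abs
    apply Summable.of_nonneg_of_le (fun j => abs_nonneg _)
      (fun j => abs_mul_log_le (ha j) (haj_le1 j) hp0 hplt)
    exact hsum_ap.div_const (1 - p)
  -- integrability of z0 ^ 2 and (z0 ^ 2) ^ p
  have hGmeas : Measurable (fun ω => z0 ω ^ 2) := by fun_prop
  have hGnn : 0 ≤ᶠ[ae P] fun ω => z0 ω ^ 2 :=
    Eventually.of_forall (fun ω => sq_nonneg _)
  have hGint : Integrable (fun ω => z0 ω ^ 2) P :=
    ⟨hGmeas.aestronglyMeasurable,
      (hasFiniteIntegral_iff_ofReal hGnn).mpr (by rw [hmu1']; exact ENNReal.one_lt_top)⟩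
  have hGint1 : ∫ ω, z0 ω ^ 2 ∂P = 1 := by
    rw [integral_eq_lintegral_of_nonneg_ae hGnn hGmeas.aestronglyMeasurable, hmu1']
    exact ENNReal.toReal_one
  have hGpmeas : Measurable (fun ω => (z0 ω ^ 2) ^ p) := by fun_prop
  have hGpnn : 0 ≤ᶠ[ae P] fun ω => (z0 ω ^ 2) ^ p :=
    Eventually.of_forall (fun ω => Real.rpow_nonneg (sq_nonneg _) p)
  have hGpint : Integrable (fun ω => (z0 ω ^ 2) ^ p) P :=
    ⟨hGpmeas.aestronglyMeasurable,
      (hasFiniteIntegral_iff_ofReal hGpnn).mpr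
        (by rw [← hmup]; exact lt_top_iff_ne_top.mpr hmup_ne_top)⟩
  have hmp : ∫ ω, (z0 ω ^ 2) ^ p ∂P = (muMom P z0 p).toReal := by
    rw [integral_eq_lintegral_of_nonneg_ae hGpnn hGpmeas.aestronglyMeasurable, hmup]
  -- the real contradiction bound
  have hlt : (∑' j : ℕ+, a j ^ p) * ∫ ω, (z0 ω ^ 2) ^ p ∂P < 1 := by
    rw [hSap, hmp, ← ENNReal.toReal_mul]
    have := (ENNReal.toReal_lt_toReal (ENNReal.mul_ne_top hAp_ne_top hmup_ne_top)
      ENNReal.one_ne_top).mpr hcontr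
    simpa using this
  refine ⟨hplt, p, hplt, lt_top_iff_ne_top.mpr hAp_ne_top, hsum_alog, ?_⟩
  rcases em (Integrable (fun ω => z0 ω ^ 2 * Real.log (z0 ω ^ 2)) P) with hInt | hInt
  · refine Or.inr ?_
    by_contra hpos
    push_neg at hpos
    -- hpos : (∑' j, a j * log (a j)) + ∫ z0² log z0² ≤ 0
    have key : ∀ j : ℕ+,
        a j + (p - 1) * (a j * Real.log (a j)
            + a j * ∫ ω, z0 ω ^ 2 * Real.log (z0 ω ^ 2) ∂P)
          ≤ a j ^ p * ∫ ω, (z0 ω ^ 2) ^ p ∂P := by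
      intro j
      have int_lower : ∫ ω, (a j * z0 ω ^ 2
            + (p - 1) * (a j * Real.log (a j) * z0 ω ^ 2
              + a j * (z0 ω ^ 2 * Real.log (z0 ω ^ 2)))) ∂P
          = a j + (p - 1) * (a j * Real.log (a j)
              + a j * ∫ ω, z0 ω ^ 2 * Real.log (z0 ω ^ 2) ∂P) := by
        have i1 : Integrable (fun ω => a j * Real.log (a j) * z0 ω ^ 2
            + a j * (z0 ω ^ 2 * Real.log (z0 ω ^ 2))) P :=
          (hGint.const_mul _).add (hInt.const_mul _)
        rw [integral_add (hGint.const_mul _) (i1.const_mul _),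
          integral_const_mul, integral_const_mul,
          integral_add (hGint.const_mul _) (hInt.const_mul _),
          integral_const_mul, integral_const_mul, hGint1]
        ring
      have hmono : ∫ ω, (a j * z0 ω ^ 2
            + (p - 1) * (a j * Real.log (a j) * z0 ω ^ 2
              + a j * (z0 ω ^ 2 * Real.log (z0 ω ^ 2)))) ∂P
          ≤ ∫ ω, a j ^ p * (z0 ω ^ 2) ^ p ∂P := by
        refine integral_mono ((hGint.const_mul _).add
          (((hGint.const_mul _).add (hInt.const_mul _)).const_mul _))
          (hGpint.const_mul _) ?_
        intro ω
        have h1 := tangent_le_rpow (t := a j * z0 ω ^ 2)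
          (mul_nonneg (ha j) (sq_nonneg _)) hp0
        rw [log_split (z0 ω) (ha j)] at h1
        simpa [← Real.mul_rpow (ha j) (sq_nonneg (z0 ω))] using h1
      calc a j + (p - 1) * (a j * Real.log (a j)
              + a j * ∫ ω, z0 ω ^ 2 * Real.log (z0 ω ^ 2) ∂P)
          = _ := int_lower.symm
        _ ≤ ∫ ω, a j ^ p * (z0 ω ^ 2) ^ p ∂P := hmono
        _ = a j ^ p * ∫ ω, (z0 ω ^ 2) ^ p ∂P := integral_const_mul _ _
    have hsum_lower : Summable (fun j : ℕ+ =>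
        a j + (p - 1) * (a j * Real.log (a j)
          + a j * ∫ ω, z0 ω ^ 2 * Real.log (z0 ω ^ 2) ∂P)) :=
      hsum_a.add (((hsum_alog.add (hsum_a.mul_right _)).mul_left _))
    have hT : (∑' j : ℕ+, (a j + (p - 1) * (a j * Real.log (a j)
          + a j * ∫ ω, z0 ω ^ 2 * Real.log (z0 ω ^ 2) ∂P)))
        = 1 + (p - 1) * ((∑' j : ℕ+, a j * Real.log (a j))
            + ∫ ω, z0 ω ^ 2 * Real.log (z0 ω ^ 2) ∂P) := by
      rw [Summable.tsum_add hsum_a ((hsum_alog.add (hsum_a.mul_right _)).mul_left _),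
        tsum_mul_left, Summable.tsum_add hsum_alog (hsum_a.mul_right _), tsum_mul_right, hSa]
      ring
    have hchain : (1:ℝ) ≤ (∑' j : ℕ+, a j ^ p) * ∫ ω, (z0 ω ^ 2) ^ p ∂P := by
      have hnn : 0 ≤ (p - 1) * ((∑' j : ℕ+, a j * Real.log (a j))
          + ∫ ω, z0 ω ^ 2 * Real.log (z0 ω ^ 2) ∂P) :=
        by
          have h1p : (0:ℝ) ≤ 1 - p := by linarith
          have hneg : (0:ℝ) ≤ -((∑' j : ℕ+, a j * Real.log (a j))
              + ∫ ω, z0 ω ^ 2 * Real.log (z0 ω ^ 2) ∂P) := by linarith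
          nlinarith [mul_nonneg h1p hneg]
      calc (1:ℝ) ≤ 1 + (p - 1) * ((∑' j : ℕ+, a j * Real.log (a j))
              + ∫ ω, z0 ω ^ 2 * Real.log (z0 ω ^ 2) ∂P) := by linarith
        _ = _ := hT.symm
        _ ≤ ∑' j : ℕ+, a j ^ p * ∫ ω, (z0 ω ^ 2) ^ p ∂P :=
            Summable.tsum_le_tsum key hsum_lower (hsum_ap.mul_right _)
        _ = (∑' j : ℕ+, a j ^ p) * ∫ ω, (z0 ω ^ 2) ^ p ∂P := tsum_mul_right
    linarith
  · exact Or.inl hInt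
end
end

section
/- Suppose A_1 = 1 and μ_1 = 1, and that there exists p* < 1 such that A_{p*} < ∞ and Σ_{j≥1} a_j log(a_j) + E[z_0² log(z_0²)] ∈ (0, ∞]. Then there exists p ∈ (p*, 1) such that A_p μ_p < 1. -/
open MeasureTheory ProbabilityTheory Filter ENNReal

noncomputable section

variable {Ω : Type*}

section AuxSlope

open Real Filter

/-- The difference quotient `(x - x^p)/(1-p)` is nonpositive when `0 ≤ x ≤ 1`. -/
lemma aux_slope_nonpos {x p : ℝ} (hx0 : 0 ≤ x) (hx1 : x ≤ 1) (hp0 : 0 < p) (hp1 : p < 1) :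
    (x - x ^ p) / (1 - p) ≤ 0 := by
  apply div_nonpos_of_nonpos_of_nonneg _ (by linarith)
  rcases eq_or_lt_of_le hx0 with h | h
  · simp [← h, Real.zero_rpow hp0.ne']
  · have h2 : x ^ (1:ℝ) ≤ x ^ p := Real.rpow_le_rpow_of_exponent_ge h hx1 hp1.le
    rw [Real.rpow_one] at h2
    linarith

/-- Monotonicity of the difference quotient in the exponent (convexity of `p ↦ x^p`). -/
lemma aux_slope_mono {x q p : ℝ} (hx : 0 ≤ x) (hq : 0 < q) (hqp : q ≤ p) (hp : p < 1) :
    (x - x ^ q) / (1 - q) ≤ (x - x ^ p) / (1 - p) := by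
  have h1q : (0:ℝ) < 1 - q := by linarith
  have h1p : (0:ℝ) < 1 - p := by linarith
  have hp0 : 0 < p := lt_of_lt_of_le hq hqp
  rcases eq_or_lt_of_le hx with h | hx0
  · simp [← h, Real.zero_rpow hq.ne', Real.zero_rpow hp0.ne']
  set t : ℝ := (1 - p) / (1 - q) with ht
  have ht0 : 0 ≤ t := by positivity
  have ht1 : t ≤ 1 := (div_le_one h1q).mpr (by linarith)
  have hcan : t * (1 - q) = 1 - p := div_mul_cancel₀ _ h1q.ne'
  have key : x ^ p ≤ t * x ^ q + (1 - t) * x := by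
    have h := Real.geom_mean_le_arith_mean2_weighted (w₁ := t) (w₂ := 1 - t)
      (p₁ := x ^ q) (p₂ := x) ht0 (by linarith)
      (Real.rpow_nonneg hx q) hx (by ring)
    calc x ^ p = (x ^ q) ^ t * x ^ (1 - t) := by
          rw [← Real.rpow_mul hx, ← Real.rpow_add hx0]
          congr 1
          nlinarith [hcan]
      _ ≤ t * x ^ q + (1 - t) * x := h
  have hiq : (1 - t) * (1 - q) = p - q := by nlinarith [hcan]
  have key2 : x ^ p * (1 - q) ≤ (1 - p) * x ^ q + (p - q) * x := by
    have h := mul_le_mul_of_nonneg_right key h1q.le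
    nlinarith [h, hcan, hiq, Real.rpow_nonneg hx q, hx]
  rw [div_le_div_iff₀ h1q h1p]
  nlinarith [key2]

/-- The difference quotient is bounded above by `x * log x`. -/
lemma aux_slope_le_xlogx {x p : ℝ} (hx : 0 ≤ x) (hp0 : 0 < p) (hp1 : p < 1) :
    (x - x ^ p) / (1 - p) ≤ x * Real.log x := by
  have h1p : (0:ℝ) < 1 - p := by linarith
  rcases eq_or_lt_of_le hx with h | hx0
  · simp [← h, Real.zero_rpow hp0.ne']
  rw [div_le_iff₀ h1p]
  have h2 : x ^ p = x * Real.exp ((p - 1) * Real.log x) := by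
    have h3 : x * Real.exp ((p - 1) * Real.log x)
        = Real.exp (Real.log x + (p - 1) * Real.log x) := by
      rw [Real.exp_add, Real.exp_log hx0]
    rw [Real.rpow_def_of_pos hx0, h3]
    congr 1
    ring
  have h1 : (p - 1) * Real.log x + 1 ≤ Real.exp ((p - 1) * Real.log x) :=
    Real.add_one_le_exp _
  have h3 : x * ((p - 1) * Real.log x + 1) ≤ x * Real.exp ((p - 1) * Real.log x) :=
    mul_le_mul_of_nonneg_left h1 hx
  have h4 : x * ((p - 1) * Real.log x + 1) = x - x * Real.log x * (1 - p) := by ring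
  rw [h2]
  linarith [h3, h4.symm.le]

/-- Bernoulli-type bound: `x^p ≤ p*x + (1-p)` for `x ≥ 0`, `0 ≤ p ≤ 1`. -/
lemma aux_rpow_le_linear {x p : ℝ} (hx : 0 ≤ x) (hp0 : 0 ≤ p) (hp1 : p ≤ 1) :
    x ^ p ≤ p * x + (1 - p) := by
  have h := Real.geom_mean_le_arith_mean2_weighted hp0 (by linarith) hx zero_le_one
    (by ring : p + (1 - p) = 1)
  simpa [Real.one_rpow] using h

/-- The difference quotients converge to `x * log x` as the exponent tends to `1⁻`. -/
lemma aux_tendsto_slope {x : ℝ} (hx : 0 ≤ x) {s : ℕ → ℝ} (hs0 : ∀ n, 0 < s n)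
    (hs1 : ∀ n, s n < 1) (hlim : Tendsto s atTop (nhds 1)) :
    Tendsto (fun n => (x - x ^ s n) / (1 - s n)) atTop (nhds (x * Real.log x)) := by
  rcases eq_or_lt_of_le hx with h | hx0
  · have heq : (fun n => (x - x ^ s n) / (1 - s n)) = fun _ => (0:ℝ) := by
      funext n
      rw [← h, Real.zero_rpow (hs0 n).ne']
      simp
    rw [heq, ← h]
    simpa using (tendsto_const_nhds : Tendsto (fun _ : ℕ => (0:ℝ)) atTop (nhds 0))
  · have hd : HasDerivAt (fun t : ℝ => x ^ t) (x * Real.log x) 1 := by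
      have h := (Real.hasStrictDerivAt_const_rpow hx0 1).hasDerivAt
      rwa [Real.rpow_one] at h
    have hslope := hasDerivAt_iff_tendsto_slope.mp hd
    have hst : Tendsto s atTop (nhdsWithin 1 {(1:ℝ)}ᶜ) :=
      tendsto_nhdsWithin_of_tendsto_nhds_of_eventually_within _ hlim
        (Eventually.of_forall fun n => (hs1 n).ne)
    refine Filter.Tendsto.congr (fun n => ?_) (hslope.comp hst)
    have hne : s n - 1 ≠ 0 := sub_ne_zero.mpr (hs1 n).ne
    have hne' : (1:ℝ) - s n ≠ 0 := sub_ne_zero.mpr (hs1 n).ne'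
    simp only [Function.comp_apply, slope_def_field, Real.rpow_one]
    rw [div_eq_div_iff hne hne']
    ring

end AuxSlope

set_option maxHeartbeats 1000000 in
/-- Corollary 2, sufficiency: in the IARCH case `A_1 = 1`, `μ_1 = 1`, if there exists `p* < 1`
with `A_{p*} < ∞` and `Σ_{j≥1} a_j log(a_j) + E[z_0² log(z_0²)] ∈ (0, ∞]`, then there exists
`p ∈ (p*, 1)` with `A_p μ_p < 1`. -/
theorem iarch_entropy_sufficient [MeasurableSpace Ω] (P : Measure Ω) [IsProbabilityMeasure P]
    (z0 : Ω → ℝ) (hz0 : Measurable z0)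
    (a : ℕ → ℝ) (ha : ∀ j : ℕ+, 0 ≤ a j)
    (hA1 : Acoef a 1 = 1) (hmu1 : muMom P z0 1 = 1)
    (pstar : ℝ) (hpstar : pstar < 1) (hApstar : Acoef a pstar < ⊤)
    (hent : EntropyPos P z0 a) :
    ∃ p : ℝ, pstar < p ∧ p < 1 ∧ Acoef a p * muMom P z0 p < 1 := by
  classical
  -- coefficient normalization facts
  have hA1' : (∑' j : ℕ+, ENNReal.ofReal (a j)) = 1 := by
    rw [← hA1]
    exact (tsum_congr fun j : ℕ+ => by rw [Real.rpow_one]).symm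
  have haj1 : ∀ j : ℕ+, a j ≤ 1 := by
    intro j
    have h := ENNReal.le_tsum (f := fun j : ℕ+ => ENNReal.ofReal (a j)) j
    rw [hA1'] at h
    exact ENNReal.ofReal_le_one.mp h
  have hsum_a : Summable fun j : ℕ+ => a j := by
    have h := ENNReal.summable_toReal (f := fun j : ℕ+ => ENNReal.ofReal (a j))
      (by rw [hA1']; exact ENNReal.one_ne_top)
    exact h.congr fun j => ENNReal.toReal_ofReal (ha j)
  have htsum_a : (∑' j : ℕ+, a j) = 1 := by
    have h := ENNReal.tsum_toReal_eq (f := fun j : ℕ+ => ENNReal.ofReal (a j))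
      (fun j => ENNReal.ofReal_ne_top)
    rw [hA1'] at h
    rw [← tsum_congr (fun j : ℕ+ => ENNReal.toReal_ofReal (ha j)), ← h]
    simp
  have hsum_ps : Summable fun j : ℕ+ => a j ^ pstar := by
    unfold Acoef at hApstar
    have h := ENNReal.summable_toReal (f := fun j : ℕ+ => ENNReal.ofReal (a j ^ pstar))
      hApstar.ne
    exact h.congr fun j => ENNReal.toReal_ofReal (Real.rpow_nonneg (ha j) _)
  -- the base exponent r
  set r : ℝ := max pstar (1/2) with hr_def
  have hr_half : (1/2:ℝ) ≤ r := le_max_right _ _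
  have hr0 : (0:ℝ) < r := lt_of_lt_of_le (by norm_num) hr_half
  have hr1 : r < 1 := max_lt hpstar (by norm_num)
  have hsum_pow : ∀ p : ℝ, r ≤ p → Summable fun j : ℕ+ => a j ^ p := by
    intro p hp
    have hp0 : 0 < p := lt_of_lt_of_le hr0 hp
    refine Summable.of_nonneg_of_le (fun j => Real.rpow_nonneg (ha j) p)
      (fun j => ?_) hsum_ps
    rcases eq_or_lt_of_le (ha j) with h | h
    · rw [← h, Real.zero_rpow hp0.ne']
      exact Real.rpow_nonneg le_rfl _
    · exact Real.rpow_le_rpow_of_exponent_ge h (haj1 j) (le_trans (le_max_left _ _) hp)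
  -- moment normalization facts
  have hsqm : Measurable fun ω => z0 ω ^ 2 := hz0.pow_const 2
  have habs2 : ∀ t : ℝ, |t| ^ (2:ℝ) = t ^ 2 := by
    intro t
    rw [show ((2:ℝ)) = ((2:ℕ):ℝ) by norm_num, Real.rpow_natCast, sq_abs]
  have hlint2 : ∫⁻ ω, ENNReal.ofReal (z0 ω ^ 2) ∂P = 1 := by
    rw [← hmu1]
    unfold muMom
    exact lintegral_congr fun ω => by rw [mul_one, habs2]
  have hint2 : Integrable (fun ω => z0 ω ^ 2) P := by
    refine ⟨hsqm.aestronglyMeasurable, ?_⟩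
    rw [hasFiniteIntegral_iff_ofReal (Filter.Eventually.of_forall fun ω => sq_nonneg _)]
    rw [hlint2]
    exact ENNReal.one_lt_top
  have hintegral2 : ∫ ω, z0 ω ^ 2 ∂P = 1 := by
    rw [integral_eq_lintegral_of_nonneg_ae (Filter.Eventually.of_forall fun ω => sq_nonneg _)
      hsqm.aestronglyMeasurable, hlint2]
    simp
  have hmeasp : ∀ p : ℝ, 0 ≤ p → Measurable fun ω => (z0 ω ^ 2) ^ p := fun p hp =>
    (Real.continuous_rpow_const hp).measurable.comp hsqm
  have hintp : ∀ p : ℝ, 0 < p → p ≤ 1 → Integrable (fun ω => (z0 ω ^ 2) ^ p) P := by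
    intro p hp0 hp1
    refine Integrable.mono' ((integrable_const (1:ℝ)).add hint2)
      ((hmeasp p hp0.le).aestronglyMeasurable) (Filter.Eventually.of_forall fun ω => ?_)
    rw [Real.norm_eq_abs, abs_of_nonneg (Real.rpow_nonneg (sq_nonneg _) _)]
    simp only [Pi.add_apply]
    have h := aux_rpow_le_linear (sq_nonneg (z0 ω)) hp0.le hp1
    nlinarith [sq_nonneg (z0 ω)]
  -- the sequence of exponents
  set s : ℕ → ℝ := fun n => 1 - (1 - r) / (n + 1) with hs_def
  have hs_r : ∀ n, r ≤ s n := by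
    intro n
    have hn0 : (0:ℝ) ≤ (n:ℝ) := Nat.cast_nonneg n
    have h1 : (1 - r) / ((n:ℝ) + 1) ≤ 1 - r := div_le_self (by linarith) (by linarith)
    simp only [hs_def]
    linarith
  have hs_lt1 : ∀ n, s n < 1 := by
    intro n
    have h1 : (0:ℝ) < (1 - r) / ((n:ℝ) + 1) := by
      apply div_pos (by linarith)
      positivity
    simp only [hs_def]
    linarith
  have hs_pos : ∀ n, 0 < s n := fun n => lt_of_lt_of_le hr0 (hs_r n)
  have hs_mono : Monotone s := by
    intro n m hnm
    have hcast : ((n:ℝ) + 1) ≤ ((m:ℝ) + 1) := by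
      have : (n:ℝ) ≤ (m:ℝ) := by exact_mod_cast hnm
      linarith
    have h1 : (1 - r) / ((m:ℝ) + 1) ≤ (1 - r) / ((n:ℝ) + 1) := by
      rw [div_le_div_iff₀ (by positivity) (by positivity)]
      exact mul_le_mul_of_nonneg_left hcast (by linarith)
    simp only [hs_def]
    linarith
  have hs_gt : ∀ n, 1 ≤ n → r < s n := by
    intro n hn
    have h2 : (1:ℝ) < (n:ℝ) + 1 := by
      have : (1:ℝ) ≤ (n:ℝ) := by exact_mod_cast hn
      linarith
    have h1 : (1 - r) / ((n:ℝ) + 1) < 1 - r := div_lt_self (by linarith) h2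
    simp only [hs_def]
    linarith
  have hs_lim : Filter.Tendsto s Filter.atTop (nhds 1) := by
    have hden : Filter.Tendsto (fun n : ℕ => (n:ℝ) + 1) Filter.atTop Filter.atTop :=
      tendsto_natCast_atTop_atTop.atTop_add tendsto_const_nhds
    have h0 : Filter.Tendsto (fun n : ℕ => (1 - r) / ((n:ℝ) + 1)) Filter.atTop (nhds 0) :=
      (tendsto_const_nhds : Filter.Tendsto (fun _ : ℕ => (1 - r)) Filter.atTop _).div_atTop hden
    have h1 : Filter.Tendsto (fun n : ℕ => 1 - (1 - r) / ((n:ℝ) + 1)) Filter.atTop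
        (nhds (1 - 0)) := tendsto_const_nhds.sub h0
    rw [sub_zero] at h1
    rw [hs_def]
    exact h1
  -- convergence of the coefficient difference quotients
  have hQA : Filter.Tendsto (fun n => ∑' j : ℕ+, (a j - a j ^ s n) / (1 - s n)) Filter.atTop
      (nhds (∑' j : ℕ+, a j * Real.log (a j))) := by
    refine tendsto_tsum_of_dominated_convergence (bound := fun j : ℕ+ => a j ^ r / (1 - r))
      ((hsum_pow r le_rfl).div_const _) (fun j => aux_tendsto_slope (ha j) hs_pos hs_lt1 hs_lim)
      (Filter.Eventually.of_forall fun n j => ?_)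
    have hd : (0:ℝ) < 1 - r := by linarith
    rw [Real.norm_eq_abs, abs_le]
    constructor
    · have h1 := aux_slope_mono (ha j) hr0 (hs_r n) (hs_lt1 n)
      have h2 : -(a j ^ r / (1 - r)) ≤ (a j - a j ^ r) / (1 - r) := by
        rw [← neg_div, div_le_div_iff₀ hd hd]
        nlinarith [ha j]
      linarith
    · have h3 := aux_slope_nonpos (ha j) (haj1 j) (hs_pos n) (hs_lt1 n)
      have hb : 0 ≤ a j ^ r / (1 - r) := div_nonneg (Real.rpow_nonneg (ha j) _) (by linarith)
      linarith
  -- the moment difference quotients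
  have hint_g : ∀ n, Integrable (fun ω => (z0 ω ^ 2 - (z0 ω ^ 2) ^ s n) / (1 - s n)) P :=
    fun n => (hint2.sub (hintp (s n) (hs_pos n) (hs_lt1 n).le)).div_const _
  have hg_mono : ∀ ω, Monotone fun n => (z0 ω ^ 2 - (z0 ω ^ 2) ^ s n) / (1 - s n) :=
    fun ω n m hnm => aux_slope_mono (sq_nonneg _) (hs_pos n) (hs_mono hnm) (hs_lt1 m)
  have hg_tendsto : ∀ ω, Filter.Tendsto (fun n => (z0 ω ^ 2 - (z0 ω ^ 2) ^ s n) / (1 - s n))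
      Filter.atTop (nhds (z0 ω ^ 2 * Real.log (z0 ω ^ 2))) :=
    fun ω => aux_tendsto_slope (sq_nonneg _) hs_pos hs_lt1 hs_lim
  have hg_le_h : ∀ n ω, (z0 ω ^ 2 - (z0 ω ^ 2) ^ s n) / (1 - s n)
      ≤ z0 ω ^ 2 * Real.log (z0 ω ^ 2) :=
    fun n ω => aux_slope_le_xlogx (sq_nonneg _) (hs_pos n) (hs_lt1 n)
  -- in both entropy cases, eventually the sum of the quotients is positive
  have hEv : ∀ᶠ n in Filter.atTop,
      0 < (∑' j : ℕ+, (a j - a j ^ s n) / (1 - s n))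
        + ∫ ω, (z0 ω ^ 2 - (z0 ω ^ 2) ^ s n) / (1 - s n) ∂P := by
    have hent' : ¬ Integrable (fun ω => z0 ω ^ 2 * Real.log (z0 ω ^ 2)) P ∨
        0 < (∑' j : ℕ+, a j * Real.log (a j))
          + ∫ ω, z0 ω ^ 2 * Real.log (z0 ω ^ 2) ∂P := hent
    by_cases hI : Integrable (fun ω => z0 ω ^ 2 * Real.log (z0 ω ^ 2)) P
    · have hQm : Filter.Tendsto
          (fun n => ∫ ω, (z0 ω ^ 2 - (z0 ω ^ 2) ^ s n) / (1 - s n) ∂P) Filter.atTop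
          (nhds (∫ ω, z0 ω ^ 2 * Real.log (z0 ω ^ 2) ∂P)) :=
        integral_tendsto_of_tendsto_of_monotone hint_g hI (ae_of_all _ hg_mono)
          (ae_of_all _ hg_tendsto)
      rcases hent' with hni | hpos
      · exact absurd hI hni
      · exact (hQA.add hQm).eventually (eventually_gt_nhds hpos)
    · -- non-integrable case: the moment quotients diverge
      have hmeas_h : Measurable fun ω => z0 ω ^ 2 * Real.log (z0 ω ^ 2) :=
        hsqm.mul (Real.measurable_log.comp hsqm)
      have hD_nonneg : ∀ n ω, 0 ≤ (z0 ω ^ 2 - (z0 ω ^ 2) ^ s n) / (1 - s n)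
          - (z0 ω ^ 2 - (z0 ω ^ 2) ^ s 0) / (1 - s 0) :=
        fun n ω => sub_nonneg.mpr (hg_mono ω (Nat.zero_le n))
      have hD_int : ∀ n, Integrable (fun ω => (z0 ω ^ 2 - (z0 ω ^ 2) ^ s n) / (1 - s n)
          - (z0 ω ^ 2 - (z0 ω ^ 2) ^ s 0) / (1 - s 0)) P := fun n =>
        (hint_g n).sub (hint_g 0)
      have hL : ∀ n, ∫⁻ ω, ENNReal.ofReal ((z0 ω ^ 2 - (z0 ω ^ 2) ^ s n) / (1 - s n)
          - (z0 ω ^ 2 - (z0 ω ^ 2) ^ s 0) / (1 - s 0)) ∂P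
          = ENNReal.ofReal (∫ ω, ((z0 ω ^ 2 - (z0 ω ^ 2) ^ s n) / (1 - s n)
            - (z0 ω ^ 2 - (z0 ω ^ 2) ^ s 0) / (1 - s 0)) ∂P) := fun n =>
        (ofReal_integral_eq_lintegral_ofReal (hD_int n)
          (ae_of_all _ (hD_nonneg n))).symm
      have hMCT : Filter.Tendsto
          (fun n => ∫⁻ ω, ENNReal.ofReal ((z0 ω ^ 2 - (z0 ω ^ 2) ^ s n) / (1 - s n)
            - (z0 ω ^ 2 - (z0 ω ^ 2) ^ s 0) / (1 - s 0)) ∂P) Filter.atTop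
          (nhds (∫⁻ ω, ENNReal.ofReal (z0 ω ^ 2 * Real.log (z0 ω ^ 2)
            - (z0 ω ^ 2 - (z0 ω ^ 2) ^ s 0) / (1 - s 0)) ∂P)) := by
        refine lintegral_tendsto_of_tendsto_of_monotone
          (fun n => (hD_int n).aemeasurable.ennreal_ofReal) ?_ ?_
        · exact ae_of_all _ fun ω n m hnm =>
            ENNReal.ofReal_le_ofReal (by have := hg_mono ω hnm; linarith)
        · exact ae_of_all _ fun ω => (ENNReal.continuous_ofReal.tendsto _).comp
            ((hg_tendsto ω).sub tendsto_const_nhds)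
      have htop : ∫⁻ ω, ENNReal.ofReal (z0 ω ^ 2 * Real.log (z0 ω ^ 2)
          - (z0 ω ^ 2 - (z0 ω ^ 2) ^ s 0) / (1 - s 0)) ∂P = ⊤ := by
        by_contra hfin
        apply hI
        have hmeas_g0 : Measurable fun ω => (z0 ω ^ 2 - (z0 ω ^ 2) ^ s 0) / (1 - s 0) :=
          (hsqm.sub (hmeasp (s 0) (hs_pos 0).le)).div_const _
        have hint_hg : Integrable (fun ω => z0 ω ^ 2 * Real.log (z0 ω ^ 2)
            - (z0 ω ^ 2 - (z0 ω ^ 2) ^ s 0) / (1 - s 0)) P := by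
          refine ⟨(hmeas_h.sub hmeas_g0).aestronglyMeasurable, ?_⟩
          rw [hasFiniteIntegral_iff_ofReal
            (Filter.Eventually.of_forall fun ω => sub_nonneg.mpr (hg_le_h 0 ω))]
          exact lt_top_iff_ne_top.mpr hfin
        have heq : (fun ω => z0 ω ^ 2 * Real.log (z0 ω ^ 2))
            = fun ω => (z0 ω ^ 2 * Real.log (z0 ω ^ 2)
              - (z0 ω ^ 2 - (z0 ω ^ 2) ^ s 0) / (1 - s 0))
              + (z0 ω ^ 2 - (z0 ω ^ 2) ^ s 0) / (1 - s 0) := by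
          funext ω
          ring
        rw [heq]
        exact hint_hg.add (hint_g 0)
      rw [htop] at hMCT
      have hDto : Filter.Tendsto
          (fun n => ∫ ω, ((z0 ω ^ 2 - (z0 ω ^ 2) ^ s n) / (1 - s n)
            - (z0 ω ^ 2 - (z0 ω ^ 2) ^ s 0) / (1 - s 0)) ∂P) Filter.atTop Filter.atTop := by
        rw [Filter.tendsto_atTop]
        intro M
        have hev := hMCT.eventually (eventually_gt_nhds
          (ENNReal.ofReal_lt_top : ENNReal.ofReal M < ⊤))
        filter_upwards [hev] with n hn
        rw [hL n] at hn
        rcases le_or_gt M 0 with hM | hM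
        · exact le_trans hM (integral_nonneg (hD_nonneg n))
        · exact ((ENNReal.ofReal_lt_ofReal_iff_of_nonneg hM.le).mp hn).le
      have hQm_top : Filter.Tendsto
          (fun n => ∫ ω, (z0 ω ^ 2 - (z0 ω ^ 2) ^ s n) / (1 - s n) ∂P)
          Filter.atTop Filter.atTop := by
        have h2 := Filter.tendsto_atTop_add_const_right Filter.atTop
          (∫ ω, (z0 ω ^ 2 - (z0 ω ^ 2) ^ s 0) / (1 - s 0) ∂P) hDto
        refine h2.congr fun n => ?_
        rw [integral_sub (hint_g n) (hint_g 0)]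
        ring
      exact (hQA.add_atTop hQm_top).eventually_gt_atTop 0
  -- choose the exponent
  obtain ⟨n, hn1, hnpos⟩ := ((Filter.eventually_ge_atTop 1).and hEv).exists
  have hp0 : 0 < s n := hs_pos n
  have hp1 : s n < 1 := hs_lt1 n
  have h1p : (0:ℝ) < 1 - s n := by linarith
  refine ⟨s n, lt_of_le_of_lt (le_max_left _ _) (hs_gt n hn1), hp1, ?_⟩
  have hSa_sum : Summable fun j : ℕ+ => a j ^ s n := hsum_pow (s n) (hs_r n)
  have hQA_eq : (∑' j : ℕ+, (a j - a j ^ s n) / (1 - s n))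
      = (1 - ∑' j : ℕ+, a j ^ s n) / (1 - s n) := by
    rw [tsum_div_const, (hsum_a.hasSum.sub hSa_sum.hasSum).tsum_eq, htsum_a]
  have hQm_eq : (∫ ω, (z0 ω ^ 2 - (z0 ω ^ 2) ^ s n) / (1 - s n) ∂P)
      = (1 - ∫ ω, (z0 ω ^ 2) ^ s n ∂P) / (1 - s n) := by
    rw [integral_div, integral_sub hint2 (hintp (s n) hp0 hp1.le), hintegral2]
  have hm_nonneg : 0 ≤ ∫ ω, (z0 ω ^ 2) ^ s n ∂P :=
    integral_nonneg fun ω => Real.rpow_nonneg (sq_nonneg _) _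
  have hm_le1 : (∫ ω, (z0 ω ^ 2) ^ s n ∂P) ≤ 1 := by
    have hb : Integrable (fun ω => s n * z0 ω ^ 2 + (1 - s n)) P :=
      (hint2.const_mul (s n)).add (integrable_const _)
    have hmono := integral_mono (hintp (s n) hp0 hp1.le) hb
      (fun ω => aux_rpow_le_linear (sq_nonneg _) hp0.le hp1.le)
    rw [integral_add (hint2.const_mul (s n)) (integrable_const _), integral_const_mul,
      hintegral2, integral_const] at hmono
    simpa using hmono
  have hQA_nonpos : (∑' j : ℕ+, (a j - a j ^ s n) / (1 - s n)) ≤ 0 :=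
    tsum_nonpos fun j => aux_slope_nonpos (ha j) (haj1 j) hp0 hp1
  have e1 : (∑' j : ℕ+, (a j - a j ^ s n) / (1 - s n)) * (1 - s n)
      = 1 - ∑' j : ℕ+, a j ^ s n := by
    rw [hQA_eq]
    field_simp
  have e2 : (∫ ω, (z0 ω ^ 2 - (z0 ω ^ 2) ^ s n) / (1 - s n) ∂P) * (1 - s n)
      = 1 - ∫ ω, (z0 ω ^ 2) ^ s n ∂P := by
    rw [hQm_eq]
    field_simp
  have key : (∑' j : ℕ+, a j ^ s n) * (∫ ω, (z0 ω ^ 2) ^ s n ∂P) < 1 := by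
    have eS : (∑' j : ℕ+, a j ^ s n)
        = 1 - (∑' j : ℕ+, (a j - a j ^ s n) / (1 - s n)) * (1 - s n) := by
      linarith [e1]
    have hprod : 0 ≤ (-(∑' j : ℕ+, (a j - a j ^ s n) / (1 - s n))) * (1 - s n)
        * (1 - ∫ ω, (z0 ω ^ 2) ^ s n ∂P) :=
      mul_nonneg (mul_nonneg (neg_nonneg.mpr hQA_nonpos) h1p.le) (sub_nonneg.mpr hm_le1)
    have hsum' : 0 < (1 - s n) * ((∑' j : ℕ+, (a j - a j ^ s n) / (1 - s n))
        + ∫ ω, (z0 ω ^ 2 - (z0 ω ^ 2) ^ s n) / (1 - s n) ∂P) := mul_pos h1p hnpos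
    rw [eS]
    nlinarith [e2, hprod, hsum', hm_nonneg]
  have hSA_nonneg : 0 ≤ ∑' j : ℕ+, a j ^ s n :=
    tsum_nonneg fun j => Real.rpow_nonneg (ha j) _
  have hAc : Acoef a (s n) = ENNReal.ofReal (∑' j : ℕ+, a j ^ s n) :=
    (ENNReal.ofReal_tsum_of_nonneg (fun j : ℕ+ => Real.rpow_nonneg (ha j) _) hSa_sum).symm
  have hmu : muMom P z0 (s n) = ENNReal.ofReal (∫ ω, (z0 ω ^ 2) ^ s n ∂P) := by
    unfold muMom
    rw [ofReal_integral_eq_lintegral_ofReal (hintp (s n) hp0 hp1.le)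
      (ae_of_all _ fun ω => Real.rpow_nonneg (sq_nonneg _) _)]
    refine lintegral_congr fun ω => ?_
    congr 1
    rw [Real.rpow_mul (abs_nonneg _), habs2]
  rw [hAc, hmu, ← ENNReal.ofReal_mul hSA_nonneg]
  exact ENNReal.ofReal_lt_one.mpr key

end
end

section
/- For every d ∈ (0,1) and every p ∈ (1/(d+1), 1], the series Σ_{j≥1} π_j(d)^p converges, so that H(p,d) = log Σ_{j≥1} π_j(d)^p is well defined; moreover, for fixed d, the function p ↦ H(p,d) is decreasing and convex on (1/(d+1), 1], and H(1,d) = 0. -/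
open MeasureTheory ProbabilityTheory Filter ENNReal

noncomputable section

/-- The FIGARCH(0,d,0) coefficients: `π_1(d) = d`,
`π_j(d) = d(1−d)(2−d)⋯(j−1−d)/j!` for `j ≥ 2`; these are the coefficients of the power
series expansion `1 − (1−x)^d = Σ_{j≥1} π_j(d) x^j`. -/
def figarchPi (d : ℝ) (j : ℕ) : ℝ :=
  d * (∏ i ∈ Finset.range (j - 1), ((i : ℝ) + 1 - d)) / (Nat.factorial j)

namespace FigarchAux

/-- Auxiliary product `Q_n = ∏_{i=1}^n (1 - d/i)`. -/
def Q (d : ℝ) (n : ℕ) : ℝ := ∏ i ∈ Finset.range n, (1 - d / ((i : ℝ) + 1))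

lemma Q_pos {d : ℝ} (hd1 : d < 1) (n : ℕ) : 0 < Q d n := by
  apply Finset.prod_pos
  intro i _
  have hi : (1 : ℝ) ≤ (i : ℝ) + 1 := by
    have := Nat.cast_nonneg (α := ℝ) i; linarith
  have : d / ((i : ℝ) + 1) < 1 := by
    rw [div_lt_one (by positivity)]
    linarith
  linarith

lemma Q_le_one {d : ℝ} (hd0 : 0 < d) (hd1 : d < 1) (n : ℕ) : Q d n ≤ 1 := by
  apply Finset.prod_le_one
  · intro i _
    have hi : (1 : ℝ) ≤ (i : ℝ) + 1 := by
      have := Nat.cast_nonneg (α := ℝ) i; linarith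
    have hlt : d / ((i : ℝ) + 1) < 1 := by
      rw [div_lt_one (by positivity)]; linarith
    linarith
  · intro i _
    have : 0 ≤ d / ((i : ℝ) + 1) := by positivity
    linarith

lemma fig_eq {d : ℝ} (n : ℕ) :
    figarchPi d (n + 1) = d / ((n : ℝ) + 1) * Q d n := by
  have hprod : ∏ i ∈ Finset.range n, ((i : ℝ) + 1 - d)
      = (Nat.factorial n : ℝ) * Q d n := by
    have h2 : ((Nat.factorial n : ℕ) : ℝ) = ∏ i ∈ Finset.range n, ((i : ℝ) + 1) := by
      rw [← Finset.prod_range_add_one_eq_factorial n]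
      push_cast
      rfl
    rw [Q, h2, ← Finset.prod_mul_distrib]
    apply Finset.prod_congr rfl
    intro i _
    have hi : ((i : ℝ) + 1) ≠ 0 := by positivity
    field_simp
  have hfact : ((Nat.factorial (n + 1) : ℕ) : ℝ) = ((n : ℝ) + 1) * (Nat.factorial n : ℝ) := by
    rw [Nat.factorial_succ]; push_cast; ring
  have hne : (Nat.factorial n : ℝ) ≠ 0 := by
    exact_mod_cast Nat.factorial_ne_zero n
  have hne2 : ((n : ℝ) + 1) ≠ 0 := by positivity
  simp only [figarchPi, Nat.add_sub_cancel, hprod, hfact]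
  field_simp

lemma fig_pos {d : ℝ} (hd0 : 0 < d) (hd1 : d < 1) (n : ℕ) : 0 < figarchPi d (n + 1) := by
  rw [fig_eq]
  have := Q_pos hd1 n
  have h1 : (0:ℝ) < (n : ℝ) + 1 := by positivity
  positivity

lemma fig_lt_one {d : ℝ} (hd0 : 0 < d) (hd1 : d < 1) (n : ℕ) : figarchPi d (n + 1) < 1 := by
  rw [fig_eq]
  have hQ1 := Q_le_one hd0 hd1 n
  have hQ0 := Q_pos hd1 n
  have h1 : (1:ℝ) ≤ (n : ℝ) + 1 := by
    have := Nat.cast_nonneg (α := ℝ) n; linarith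
  have hd' : d / ((n : ℝ) + 1) ≤ d := by
    rw [div_le_iff₀ (by linarith)]
    nlinarith
  calc d / ((n : ℝ) + 1) * Q d n ≤ d * 1 := by
        apply mul_le_mul hd' hQ1 (le_of_lt hQ0) (le_of_lt hd0)
    _ < 1 := by linarith

/-- Harmonic sum lower bound. -/
lemma log_le_harmonic (n : ℕ) :
    Real.log ((n : ℝ) + 1) ≤ ∑ i ∈ Finset.range n, 1 / ((i : ℝ) + 1) := by
  induction n with
  | zero => simp
  | succ n ih =>
    rw [Finset.sum_range_succ]
    have h1 : (0:ℝ) < (n : ℝ) + 1 := by positivity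
    have h2 : (0:ℝ) < (n : ℝ) + 2 := by positivity
    have key : Real.log (((n : ℝ) + 2) / ((n : ℝ) + 1)) ≤ 1 / ((n : ℝ) + 1) := by
      have h := Real.log_le_sub_one_of_pos (x := ((n : ℝ) + 2) / ((n : ℝ) + 1)) (by positivity)
      have heq : ((n : ℝ) + 2) / ((n : ℝ) + 1) - 1 = 1 / ((n : ℝ) + 1) := by
        field_simp
        norm_num
      rw [heq] at h
      exact h
    have hsplit : Real.log ((n : ℝ) + 1 + 1)
        = Real.log ((n : ℝ) + 1) + Real.log (((n : ℝ) + 2) / ((n : ℝ) + 1)) := by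
      rw [← Real.log_mul (ne_of_gt h1) (by positivity)]
      congr 1
      field_simp
      ring
    push_cast
    push_cast at ih
    rw [hsplit]
    linarith

lemma Q_le_rpow {d : ℝ} (hd0 : 0 < d) (hd1 : d < 1) (n : ℕ) :
    Q d n ≤ ((n : ℝ) + 1) ^ (-d) := by
  have step1 : Q d n ≤ ∏ i ∈ Finset.range n, Real.exp (-(d / ((i : ℝ) + 1))) := by
    apply Finset.prod_le_prod
    · intro i _
      have hi : (1 : ℝ) ≤ (i : ℝ) + 1 := by
        have := Nat.cast_nonneg (α := ℝ) i; linarith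
      have : d / ((i : ℝ) + 1) < 1 := by
        rw [div_lt_one (by positivity)]; linarith
      linarith
    · intro i _
      have := Real.add_one_le_exp (-(d / ((i : ℝ) + 1)))
      linarith
  have step2 : ∏ i ∈ Finset.range n, Real.exp (-(d / ((i : ℝ) + 1)))
      = Real.exp (-(d * ∑ i ∈ Finset.range n, 1 / ((i : ℝ) + 1))) := by
    rw [← Real.exp_sum]
    congr 1
    rw [Finset.mul_sum, ← Finset.sum_neg_distrib]
    apply Finset.sum_congr rfl
    intro i _
    field_simp
  have step3 : Real.exp (-(d * ∑ i ∈ Finset.range n, 1 / ((i : ℝ) + 1)))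
      ≤ Real.exp (-(d * Real.log ((n : ℝ) + 1))) := by
    apply Real.exp_le_exp.2
    have := log_le_harmonic n
    nlinarith
  have step4 : Real.exp (-(d * Real.log ((n : ℝ) + 1))) = ((n : ℝ) + 1) ^ (-d) := by
    rw [Real.rpow_def_of_pos (by positivity)]
    congr 1
    ring
  calc Q d n ≤ _ := step1
    _ = _ := step2
    _ ≤ _ := step3
    _ = _ := step4

lemma fig_le {d : ℝ} (hd0 : 0 < d) (hd1 : d < 1) (n : ℕ) :
    figarchPi d (n + 1) ≤ d * ((n : ℝ) + 1) ^ (-(1 + d)) := by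
  rw [fig_eq]
  have h1 : (0:ℝ) < (n : ℝ) + 1 := by positivity
  have key : ((n : ℝ) + 1) ^ (-(1 + d)) = 1 / ((n : ℝ) + 1) * ((n : ℝ) + 1) ^ (-d) := by
    rw [show -(1 + d) = (-1) + (-d) by ring, Real.rpow_add h1, Real.rpow_neg_one]
    field_simp
  rw [key]
  have := Q_le_rpow hd0 hd1 n
  have hQ0 := Q_pos hd1 n
  calc d / ((n : ℝ) + 1) * Q d n ≤ d / ((n : ℝ) + 1) * (((n : ℝ) + 1) ^ (-d)) := by
        apply mul_le_mul_of_nonneg_left this (by positivity)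
    _ = d * (1 / ((n : ℝ) + 1) * ((n : ℝ) + 1) ^ (-d)) := by ring

/-- Summability over ℕ of the shifted coefficients to the power `p`. -/
lemma summable_nat {d : ℝ} (hd0 : 0 < d) (hd1 : d < 1) {p : ℝ} (hp : 1 / (d + 1) < p) :
    Summable (fun n : ℕ => figarchPi d (n + 1) ^ p) := by
  have hp0 : 0 < p := lt_trans (by positivity) hp
  have hexp : (1 + d) * p > 1 := by
    rw [div_lt_iff₀ (by linarith)] at hp
    nlinarith
  have hsum : Summable (fun n : ℕ => d ^ p * ((n : ℝ) + 1) ^ (-((1 + d) * p))) := by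
    apply Summable.mul_left
    have hbase : Summable (fun n : ℕ => (n : ℝ) ^ (-((1 + d) * p))) :=
      Real.summable_nat_rpow.2 (by linarith)
    have := (summable_nat_add_iff 1).2 hbase
    apply this.congr
    intro n
    push_cast
    ring_nf
  apply Summable.of_nonneg_of_le _ _ hsum
  · intro n
    exact Real.rpow_nonneg (le_of_lt (fig_pos hd0 hd1 n)) p
  · intro n
    have hpos := fig_pos hd0 hd1 n
    have hle := fig_le hd0 hd1 n
    calc figarchPi d (n + 1) ^ p ≤ (d * ((n : ℝ) + 1) ^ (-(1 + d))) ^ p :=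
          Real.rpow_le_rpow (le_of_lt hpos) hle (le_of_lt hp0)
      _ = d ^ p * ((n : ℝ) + 1) ^ (-((1 + d) * p)) := by
          rw [Real.mul_rpow (le_of_lt hd0) (by positivity),
            ← Real.rpow_mul (by positivity : (0:ℝ) ≤ (n : ℝ) + 1)]
          ring_nf

/-- Partial sums telescope. -/
lemma sum_range_fig {d : ℝ} (n : ℕ) :
    ∑ k ∈ Finset.range n, figarchPi d (k + 1) = 1 - Q d n := by
  induction n with
  | zero => simp [Q]
  | succ n ih =>
    rw [Finset.sum_range_succ, ih, fig_eq]
    have : Q d (n + 1) = Q d n * (1 - d / ((n : ℝ) + 1)) := by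
      rw [Q, Finset.prod_range_succ]; rfl
    rw [this]
    ring

lemma hasSum_one {d : ℝ} (hd0 : 0 < d) (hd1 : d < 1) :
    HasSum (fun n : ℕ => figarchPi d (n + 1)) 1 := by
  have hsumm : Summable (fun n : ℕ => figarchPi d (n + 1)) := by
    have h := summable_nat hd0 hd1 (p := 1) (by rw [div_lt_one (by linarith)]; linarith)
    apply h.congr
    intro n
    rw [Real.rpow_one]
  rw [hsumm.hasSum_iff_tendsto_nat]
  have hQ : Tendsto (fun n : ℕ => Q d n) atTop (nhds 0) := by
    apply squeeze_zero (fun n => le_of_lt (Q_pos hd1 n)) (fun n => Q_le_rpow hd0 hd1 n)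
    have h1 : Tendsto (fun x : ℝ => x ^ (-d)) atTop (nhds 0) := tendsto_rpow_neg_atTop hd0
    exact h1.comp (tendsto_atTop_add_const_right atTop 1 tendsto_natCast_atTop_atTop)
  have : Tendsto (fun n : ℕ => 1 - Q d n) atTop (nhds (1 - 0)) :=
    tendsto_const_nhds.sub hQ
  simp only [sub_zero] at this
  apply this.congr
  intro n
  rw [sum_range_fig]

end FigarchAux

/-- For `d ∈ (0,1)` and `p ∈ (1/(d+1), 1]`, `Σ_{j≥1} π_j(d)^p` converges, so that
`H(p,d) = log Σ_{j≥1} π_j(d)^p` is well defined; moreover `p ↦ H(p,d)` is (strictly)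
decreasing and convex on `(1/(d+1), 1]`, and `H(1,d) = 0`. -/
theorem figarch_H_properties (d : ℝ) (hd0 : 0 < d) (hd1 : d < 1) :
    (∀ p : ℝ, 1 / (d + 1) < p → p ≤ 1 → Summable (fun j : ℕ+ => figarchPi d j ^ p)) ∧
    StrictAntiOn (fun p : ℝ => Real.log (∑' j : ℕ+, figarchPi d j ^ p))
      (Set.Ioc (1 / (d + 1)) 1) ∧
    ConvexOn ℝ (Set.Ioc (1 / (d + 1)) 1)
      (fun p : ℝ => Real.log (∑' j : ℕ+, figarchPi d j ^ p)) ∧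
    Real.log (∑' j : ℕ+, figarchPi d j ^ (1 : ℝ)) = 0 := by
  classical
  set A : ℕ → ℝ := fun n => figarchPi d (n + 1) with hA
  have hApos : ∀ n, 0 < A n := fun n => FigarchAux.fig_pos hd0 hd1 n
  have hAlt1 : ∀ n, A n < 1 := fun n => FigarchAux.fig_lt_one hd0 hd1 n
  have htsum : ∀ p : ℝ, (∑' j : ℕ+, figarchPi d (j : ℕ) ^ p) = ∑' n : ℕ, A n ^ p := by
    intro p
    rw [← Equiv.tsum_eq Equiv.pnatEquivNat.symm (fun j : ℕ+ => figarchPi d (j : ℕ) ^ p)]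
    apply tsum_congr
    intro n
    simp [A]
  have hsummN : ∀ {p : ℝ}, 1 / (d + 1) < p → Summable (fun n : ℕ => A n ^ p) :=
    fun hp => FigarchAux.summable_nat hd0 hd1 hp
  have hsummP : ∀ p : ℝ, 1 / (d + 1) < p → Summable (fun j : ℕ+ => figarchPi d (j : ℕ) ^ p) := by
    intro p hp
    rw [← Equiv.summable_iff Equiv.pnatEquivNat.symm]
    apply (hsummN hp).congr
    intro n
    simp [A, Function.comp]
  have hpos : ∀ {p : ℝ}, 1 / (d + 1) < p → 0 < ∑' n : ℕ, A n ^ p := by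
    intro p hp
    exact Summable.tsum_pos (hsummN hp)
      (fun n => Real.rpow_nonneg (le_of_lt (hApos n)) _) 0
      (Real.rpow_pos_of_pos (hApos 0) _)
  refine ⟨fun p hp _ => hsummP p hp, ?_, ?_, ?_⟩
  · -- StrictAntiOn
    intro p hp q hq hpq
    simp only
    rw [htsum p, htsum q]
    apply Real.log_lt_log (hpos hq.1)
    refine Summable.tsum_lt_tsum (i := 0) (f := fun n => A n ^ q) (g := fun n => A n ^ p)
      (fun n => le_of_lt (Real.rpow_lt_rpow_of_exponent_gt (hApos n) (hAlt1 n) hpq))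
      (Real.rpow_lt_rpow_of_exponent_gt (hApos 0) (hAlt1 0) hpq)
      (hsummN hq.1) (hsummN hp.1)
  · -- ConvexOn
    refine ⟨convex_Ioc _ _, ?_⟩
    intro x hx y hy a b ha hb hab
    simp only [smul_eq_mul]
    rcases ha.eq_or_lt with rfl | ha'
    · simp only [zero_add] at hab
      subst hab
      simp
    rcases hb.eq_or_lt with rfl | hb'
    · simp only [add_zero] at hab
      subst hab
      simp
    have ha1 : a < 1 := by linarith
    have hmem : a * x + b * y ∈ Set.Ioc (1 / (d + 1)) 1 := by
      have := (convex_Ioc (1 / (d + 1)) 1) hx hy ha hb hab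
      simpa using this
    rw [htsum, htsum x, htsum y]
    have hconj : Real.HolderConjugate (1 / a) (1 / b) := by
      rw [Real.holderConjugate_iff]
      constructor
      · rw [lt_div_iff₀ ha']
        linarith
      · simp only [one_div, inv_inv]
        exact hab
    have haxn : ∀ n, (A n ^ (a * x)) ^ (1 / a) = A n ^ x := by
      intro n
      rw [← Real.rpow_mul (le_of_lt (hApos n))]
      congr 1
      field_simp
    have hbyn : ∀ n, (A n ^ (b * y)) ^ (1 / b) = A n ^ y := by
      intro n
      rw [← Real.rpow_mul (le_of_lt (hApos n))]
      congr 1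
      field_simp
    have hfs : Summable (fun n : ℕ => (A n ^ (a * x)) ^ (1 / a)) := by
      apply (hsummN hx.1).congr
      intro n
      rw [haxn]
    have hgs : Summable (fun n : ℕ => (A n ^ (b * y)) ^ (1 / b)) := by
      apply (hsummN hy.1).congr
      intro n
      rw [hbyn]
    have H := (Real.inner_le_Lp_mul_Lq_tsum_of_nonneg (f := fun n : ℕ => A n ^ (a * x))
      (g := fun n : ℕ => A n ^ (b * y)) hconj
      (fun n => Real.rpow_nonneg (le_of_lt (hApos n)) _)
      (fun n => Real.rpow_nonneg (le_of_lt (hApos n)) _) hfs hgs)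
    have hmul : ∀ n, A n ^ (a * x) * A n ^ (b * y) = A n ^ (a * x + b * y) := by
      intro n
      rw [← Real.rpow_add (hApos n)]
    have hinva : 1 / (1 / a) = a := one_div_one_div a
    have hinvb : 1 / (1 / b) = b := one_div_one_div b
    rw [tsum_congr hmul, tsum_congr haxn, tsum_congr hbyn, hinva, hinvb] at H
    have hSx : 0 < ∑' n : ℕ, A n ^ x := hpos hx.1
    have hSy : 0 < ∑' n : ℕ, A n ^ y := hpos hy.1
    calc Real.log (∑' n : ℕ, A n ^ (a * x + b * y))
        ≤ Real.log ((∑' n : ℕ, A n ^ x) ^ a * (∑' n : ℕ, A n ^ y) ^ b) :=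
          Real.log_le_log (hpos hmem.1) H
      _ = a * Real.log (∑' n : ℕ, A n ^ x) + b * Real.log (∑' n : ℕ, A n ^ y) := by
          rw [Real.log_mul (ne_of_gt (Real.rpow_pos_of_pos hSx a))
            (ne_of_gt (Real.rpow_pos_of_pos hSy b)),
            Real.log_rpow hSx, Real.log_rpow hSy]
  · -- H(1,d) = 0
    rw [htsum 1]
    have h1 : (∑' n : ℕ, A n ^ (1 : ℝ)) = 1 := by
      have he : (fun n : ℕ => A n ^ (1 : ℝ)) = fun n : ℕ => A n := by
        funext n; rw [Real.rpow_one]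
      rw [he, (FigarchAux.hasSum_one hd0 hd1).tsum_eq]
    rw [h1, Real.log_one]

end
end

section
/- For every fixed p ∈ (1/2, 1), lim_{d→1⁻} H(p,d) = 0, i.e. Σ_{j≥1} π_j(d)^p → 1 as d → 1 from below. (This uses that for each j ≥ 2, π_j(d)/d is a decreasing function of d on (0,1) and lim_{d→1⁻} π_j(d) = 0, together with dominated/monotone convergence.) -/
open MeasureTheory ProbabilityTheory Filter ENNReal

noncomputable section

/-- Key per-factor bound: `k - d ≤ k * (k/(k+1))^d` for `d ∈ [0,1]`, `k ≥ 1`. -/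
lemma figarch_keyB {d k : ℝ} (hd0 : 0 ≤ d) (hd1 : d ≤ 1) (hk : 1 ≤ k) :
    k - d ≤ k * (k / (k + 1)) ^ d := by
  have hk0 : (0:ℝ) < k := lt_of_lt_of_le one_pos hk
  have h1 : k - d ≤ k * Real.exp (-(d / k)) := by
    have he := Real.add_one_le_exp (-(d / k))
    have heq : k * (-(d / k) + 1) = k - d := by field_simp; ring
    nlinarith [Real.exp_pos (-(d/k))]
  have h2 : Real.exp (-(d / k)) ≤ (k / (k + 1)) ^ d := by
    have hb : (0:ℝ) < k / (k + 1) := by positivity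
    rw [Real.rpow_def_of_pos hb, Real.exp_le_exp]
    have hlog : Real.log ((k + 1) / k) ≤ 1 / k := by
      have h0 := Real.log_le_sub_one_of_pos (show (0:ℝ) < (k + 1) / k by positivity)
      have h : (k + 1) / k - 1 = 1 / k := by field_simp; ring
      linarith [h ▸ h0]
    have hlneg : Real.log (k / (k + 1)) = -Real.log ((k + 1) / k) := by
      rw [Real.log_div (by positivity) (by positivity), Real.log_div (by positivity) hk0.ne']
      ring
    rw [hlneg]
    have hml : d * Real.log ((k + 1) / k) ≤ d * (1 / k) :=
      mul_le_mul_of_nonneg_left hlog hd0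
    have hdk : d * (1 / k) = d / k := by ring
    nlinarith
  calc k - d ≤ k * Real.exp (-(d / k)) := h1
    _ ≤ k * (k / (k + 1)) ^ d := mul_le_mul_of_nonneg_left h2 hk0.le

/-- Product bound: `∏_{i<m+1} (i+1-d) ≤ (1-d) (m+1)! (2/(m+2))^d`. -/
lemma figarch_prodB {d : ℝ} (hd0 : 0 ≤ d) (hd1 : d ≤ 1) (m : ℕ) :
    ∏ i ∈ Finset.range (m + 1), ((i : ℝ) + 1 - d) ≤
      (1 - d) * (Nat.factorial (m + 1)) * (2 / ((m : ℝ) + 2)) ^ d := by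
  induction m with
  | zero => norm_num [Real.one_rpow]
  | succ n ih =>
    rw [Finset.prod_range_succ]
    push_cast
    have hn0 : (0:ℝ) ≤ (n:ℝ) := Nat.cast_nonneg n
    have hm2 : (1:ℝ) ≤ (n : ℝ) + 2 := by linarith
    have hfac : (0:ℝ) ≤ (n : ℝ) + 1 + 1 - d := by linarith
    have hkey := figarch_keyB hd0 hd1 hm2
    have hrp : (0:ℝ) ≤ (2 / ((n : ℝ) + 2)) ^ d := Real.rpow_nonneg (by positivity) d
    have hstep : ((n:ℝ) + 2 - d) * (2 / ((n : ℝ) + 2)) ^ d ≤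
        ((n:ℝ) + 2) * (2 / ((n : ℝ) + 3)) ^ d := by
      have h1 : ((n:ℝ) + 2 - d) * (2 / ((n : ℝ) + 2)) ^ d ≤
          (((n:ℝ) + 2) * (((n:ℝ) + 2) / (((n:ℝ) + 2) + 1)) ^ d) * (2 / ((n : ℝ) + 2)) ^ d :=
        mul_le_mul_of_nonneg_right hkey hrp
      have h2 : (((n:ℝ) + 2) * (((n:ℝ) + 2) / (((n:ℝ) + 2) + 1)) ^ d) * (2 / ((n : ℝ) + 2)) ^ d
          = ((n:ℝ) + 2) * (2 / ((n : ℝ) + 3)) ^ d := by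
        rw [mul_assoc, ← Real.mul_rpow (by positivity) (by positivity)]
        congr 2
        field_simp
        ring
      rw [h2] at h1
      exact h1
    have hfac2 : (Nat.factorial (n + 1 + 1) : ℝ) = ((n:ℝ) + 2) * (Nat.factorial (n + 1)) := by
      rw [Nat.factorial_succ]
      push_cast
      ring
    have hfac1pos : (0:ℝ) ≤ (Nat.factorial (n + 1) : ℝ) := Nat.cast_nonneg _
    have h1d : (0:ℝ) ≤ 1 - d := by linarith
    calc (∏ i ∈ Finset.range (n + 1), ((i : ℝ) + 1 - d)) * ((n:ℝ) + 1 + 1 - d)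
        ≤ ((1 - d) * (Nat.factorial (n + 1)) * (2 / ((n : ℝ) + 2)) ^ d) * ((n:ℝ) + 1 + 1 - d) :=
          mul_le_mul_of_nonneg_right ih hfac
      _ = (1 - d) * (Nat.factorial (n + 1)) * (((n:ℝ) + 2 - d) * (2 / ((n : ℝ) + 2)) ^ d) := by
          ring
      _ ≤ (1 - d) * (Nat.factorial (n + 1)) * (((n:ℝ) + 2) * (2 / ((n : ℝ) + 3)) ^ d) := by
          apply mul_le_mul_of_nonneg_left hstep
          positivity
      _ = (1 - d) * (Nat.factorial (n + 1 + 1)) * (2 / ((n:ℝ) + 1 + 2)) ^ d := by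
          rw [hfac2, show ((n:ℝ) + 1 + 2) = (n:ℝ) + 3 from by ring]
          ring

/-- Uniform domination: for `d₀ ≤ d < 1` with `0 < d₀`,
`0 ≤ π_j(d) ≤ 2 j^{-(1+d₀)}`. -/
lemma figarch_bound {d₀ d : ℝ} (hd₀0 : 0 < d₀) (hdd : d₀ ≤ d) (hd1 : d < 1)
    (j : ℕ) (hj : 1 ≤ j) :
    0 ≤ figarchPi d j ∧ figarchPi d j ≤ 2 * (j : ℝ) ^ (-(1 + d₀)) := by
  have hd0 : (0:ℝ) ≤ d := le_trans hd₀0.le hdd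
  constructor
  · apply div_nonneg (mul_nonneg hd0 (Finset.prod_nonneg fun i _ => ?_)) (Nat.cast_nonneg _)
    have : (0:ℝ) ≤ (i:ℝ) := Nat.cast_nonneg i
    linarith
  · obtain ⟨m, rfl⟩ | rfl : (∃ m, j = m + 2) ∨ j = 1 := by
      rcases Nat.lt_or_ge j 2 with h | h
      · right; omega
      · left; exact ⟨j - 2, by omega⟩
    · -- j = m + 2
      have hprod := figarch_prodB hd0 hd1.le m
      have hj2 : ((m + 2 : ℕ) : ℝ) = (m : ℝ) + 2 := by push_cast; ring
      have hjpos : (0:ℝ) < (m:ℝ) + 2 := by positivity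
      have hfacpos : (0:ℝ) < (Nat.factorial (m + 2) : ℝ) := by
        exact_mod_cast Nat.factorial_pos _
      have hfac2 : (Nat.factorial (m + 2) : ℝ) = ((m:ℝ) + 2) * (Nat.factorial (m + 1)) := by
        rw [show m + 2 = (m+1) + 1 from rfl, Nat.factorial_succ]
        push_cast
        ring
      have hfac1pos : (0:ℝ) < (Nat.factorial (m + 1) : ℝ) := by
        exact_mod_cast Nat.factorial_pos _
      have hrp : (0:ℝ) ≤ (2 / ((m : ℝ) + 2)) ^ d := Real.rpow_nonneg (by positivity) d
      have hprodnn : (0:ℝ) ≤ ∏ i ∈ Finset.range (m + 1), ((i : ℝ) + 1 - d) := by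
        apply Finset.prod_nonneg
        intro i _
        have : (0:ℝ) ≤ (i:ℝ) := Nat.cast_nonneg i
        linarith
      -- step 1 : π ≤ (2/(m+2))^d / (m+2)
      have h1 : figarchPi d (m + 2) ≤ (2 / ((m:ℝ) + 2)) ^ d / ((m:ℝ) + 2) := by
        have hπ : figarchPi d (m + 2) =
            d * (∏ i ∈ Finset.range (m + 1), ((i : ℝ) + 1 - d)) / (Nat.factorial (m + 2)) := by
          simp [figarchPi]
        rw [hπ, div_le_div_iff₀ hfacpos hjpos]
        have hnum : d * (∏ i ∈ Finset.range (m + 1), ((i : ℝ) + 1 - d)) ≤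
            (Nat.factorial (m + 1)) * (2 / ((m : ℝ) + 2)) ^ d := by
          have step1 : d * (∏ i ∈ Finset.range (m + 1), ((i : ℝ) + 1 - d)) ≤
              1 * ((1 - d) * (Nat.factorial (m + 1)) * (2 / ((m : ℝ) + 2)) ^ d) :=
            mul_le_mul hd1.le hprod hprodnn (by norm_num)
          nlinarith [mul_nonneg (mul_nonneg hd0 hfac1pos.le) hrp]
        calc d * (∏ i ∈ Finset.range (m + 1), ((i : ℝ) + 1 - d)) * ((m:ℝ) + 2)
            ≤ ((Nat.factorial (m + 1)) * (2 / ((m : ℝ) + 2)) ^ d) * ((m:ℝ) + 2) :=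
              mul_le_mul_of_nonneg_right hnum hjpos.le
          _ = (2 / ((m:ℝ) + 2)) ^ d * (Nat.factorial (m + 2)) := by rw [hfac2]; ring
      -- step 2
      have h2 : (2 / ((m:ℝ) + 2)) ^ d / ((m:ℝ) + 2) ≤ 2 * ((m:ℝ) + 2) ^ (-(1 + d₀)) := by
        have e1 : (2 / ((m:ℝ) + 2)) ^ d = 2 ^ d * ((m:ℝ) + 2) ^ (-d) := by
          rw [Real.div_rpow (by norm_num) hjpos.le, Real.rpow_neg hjpos.le, div_eq_mul_inv]
        have e2 : (2:ℝ) ^ d ≤ (2:ℝ) := by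
          calc (2:ℝ) ^ d ≤ 2 ^ (1:ℝ) :=
            Real.rpow_le_rpow_of_exponent_le (by norm_num) hd1.le
          _ = 2 := Real.rpow_one 2
        have e3 : ((m:ℝ) + 2) ^ (-d) / ((m:ℝ) + 2) = ((m:ℝ) + 2) ^ (-d + (-1:ℝ)) := by
          rw [Real.rpow_add hjpos, Real.rpow_neg_one, div_eq_mul_inv]
        have e4 : ((m:ℝ) + 2) ^ (-d + (-1:ℝ)) ≤ ((m:ℝ) + 2) ^ (-(1 + d₀)) := by
          apply Real.rpow_le_rpow_of_exponent_le (by linarith)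
          linarith
        have hrpn : (0:ℝ) ≤ ((m:ℝ) + 2) ^ (-d) := Real.rpow_nonneg hjpos.le _
        calc (2 / ((m:ℝ) + 2)) ^ d / ((m:ℝ) + 2)
            = 2 ^ d * (((m:ℝ) + 2) ^ (-d) / ((m:ℝ) + 2)) := by rw [e1]; ring
          _ ≤ 2 * (((m:ℝ) + 2) ^ (-d) / ((m:ℝ) + 2)) := by
              apply mul_le_mul_of_nonneg_right e2
              positivity
          _ = 2 * ((m:ℝ) + 2) ^ (-d + (-1:ℝ)) := by rw [e3]
          _ ≤ 2 * ((m:ℝ) + 2) ^ (-(1 + d₀)) := by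
              apply mul_le_mul_of_nonneg_left e4
              norm_num
      rw [hj2]
      exact le_trans h1 h2
    · -- j = 1
      have hπ1 : figarchPi d 1 = d := by simp [figarchPi]
      rw [hπ1]
      have h11 : ((1:ℕ):ℝ) ^ (-(1 + d₀)) = 1 := by norm_num
      rw [h11]
      linarith

/-- For fixed `p ∈ (1/2, 1)`, `Σ_{j≥1} π_j(d)^p → 1` as `d → 1⁻`, i.e. `H(p,d) → 0`. -/
theorem figarch_H_tendsto_zero (p : ℝ) (hp0 : 1 / 2 < p) (hp1 : p < 1) :
    Tendsto (fun d : ℝ => ∑' j : ℕ+, figarchPi d j ^ p) (nhdsWithin 1 (Set.Iio 1))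
        (nhds 1) ∧
      Tendsto (fun d : ℝ => Real.log (∑' j : ℕ+, figarchPi d j ^ p))
        (nhdsWithin 1 (Set.Iio 1)) (nhds 0) := by
  have hp : (0:ℝ) < p := lt_trans (by norm_num) hp0
  set d₀ : ℝ := 1 / (2 * p) with hd₀def
  have hd₀0 : 0 < d₀ := by positivity
  have hd₀1 : d₀ < 1 := by
    rw [hd₀def, div_lt_one (by positivity)]
    linarith
  -- dominating function
  set bound : ℕ+ → ℝ := fun j => (2 * ((j:ℕ) : ℝ) ^ (-(1 + d₀))) ^ p with hbdef
  have hboundeq : ∀ j : ℕ+, bound j = 2 ^ p * ((j:ℕ) : ℝ) ^ ((-(1 + d₀)) * p) := by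
    intro j
    have hjpos : (0:ℝ) ≤ ((j:ℕ):ℝ) := Nat.cast_nonneg _
    simp only [hbdef]
    rw [Real.mul_rpow (by norm_num) (Real.rpow_nonneg hjpos _), ← Real.rpow_mul hjpos]
  have hexp : (-(1 + d₀)) * p < -1 := by
    have h : d₀ * p = 1 / 2 := by
      rw [hd₀def]
      field_simp
    nlinarith
  have hsum : Summable bound := by
    have hsN : Summable (fun n : ℕ => 2 ^ p * (n : ℝ) ^ ((-(1 + d₀)) * p)) :=
      (Real.summable_nat_rpow.2 hexp).mul_left _
    have hcomp := hsN.comp_injective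
      (show Function.Injective (fun j : ℕ+ => (j:ℕ)) from fun a b h => PNat.coe_injective h)
    exact Summable.congr hcomp fun j => (hboundeq j).symm
  -- pointwise limits
  set a : ℕ+ → ℝ := fun j => if j = 1 then 1 else 0 with hadef
  have hab : ∀ j : ℕ+, Tendsto (fun d : ℝ => figarchPi d j ^ p)
      (nhdsWithin 1 (Set.Iio 1)) (nhds (a j)) := by
    intro j
    have hcont : ContinuousAt (fun d : ℝ => figarchPi d (j:ℕ)) 1 := by
      have hc : Continuous (fun d : ℝ => figarchPi d (j:ℕ)) := by
        unfold figarchPi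
        exact (continuous_id.mul (continuous_finset_prod _ fun i _ =>
          continuous_const.sub continuous_id)).div_const _
      exact hc.continuousAt
    have hval : a j = figarchPi 1 (j:ℕ) ^ p := by
      rcases eq_or_ne j 1 with rfl | hj
      · simp [hadef, figarchPi]
      · have hj1 : (j:ℕ) ≠ 1 := by
          intro h
          exact hj (PNat.coe_injective (by simpa using h))
        have hj2 : 2 ≤ (j:ℕ) := by
          have := j.pos
          omega
        have hz0 : figarchPi 1 (j:ℕ) = 0 := by
          have hz : (∏ i ∈ Finset.range ((j:ℕ) - 1), ((i : ℝ) + 1 - 1)) = 0 :=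
            Finset.prod_eq_zero (i := 0) (Finset.mem_range.mpr (by omega)) (by norm_num)
          unfold figarchPi
          rw [hz, mul_zero, zero_div]
        rw [hz0, Real.zero_rpow hp.ne']
        simp [hadef, hj]
    rw [hval]
    have hcont2 : ContinuousAt (fun d : ℝ => figarchPi d (j:ℕ) ^ p) 1 :=
      ContinuousAt.comp (Real.continuousAt_rpow_const _ _ (Or.inr hp.le)) hcont
    exact hcont2.continuousWithinAt.tendsto
  -- eventual bound
  have hbound : ∀ᶠ d in nhdsWithin (1:ℝ) (Set.Iio 1), ∀ j : ℕ+,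
      ‖figarchPi d j ^ p‖ ≤ bound j := by
    have hmem : Set.Ioo d₀ 1 ∈ nhdsWithin (1:ℝ) (Set.Iio 1) :=
      Ioo_mem_nhdsLT_of_mem ⟨hd₀1, le_refl 1⟩
    filter_upwards [hmem] with d hd j
    obtain ⟨hπ0, hπle⟩ := figarch_bound hd₀0 hd.1.le hd.2 (j:ℕ) j.one_le
    have hb : bound j = (2 * ((j:ℕ) : ℝ) ^ (-(1 + d₀))) ^ p := by simp only [hbdef]
    rw [Real.norm_eq_abs, abs_of_nonneg (Real.rpow_nonneg hπ0 _), hb]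
    exact Real.rpow_le_rpow hπ0 hπle hp.le
  have key := tendsto_tsum_of_dominated_convergence hsum hab hbound
  have hsa : (∑' j : ℕ+, a j) = 1 := by
    rw [tsum_eq_single 1 (fun j hj => by simp [hadef, hj])]
    simp [hadef]
  rw [hsa] at key
  refine ⟨key, ?_⟩
  have hlog := key.log one_ne_zero
  simpa using hlog

end
end

section
/- For every d ∈ (0,1) and every p ∈ (1/(d+1), 1), one has 0 ≤ −L(d) ≤ H(p,d)/(1−p), where L(d) = Σ_{j≥1} π_j(d) log(π_j(d)). Consequently, lim_{d→1⁻} L(d) = 0. -/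
open MeasureTheory ProbabilityTheory Filter ENNReal

noncomputable section

namespace FigAux


def Q (d : ℝ) (m : ℕ) : ℝ := ∏ k ∈ Finset.range m, (1 - d / (k + 1))

lemma Q_succ (d : ℝ) (m : ℕ) : Q d (m + 1) = Q d m * (1 - d / (m + 1)) := by
  simp [Q, Finset.prod_range_succ]

lemma cast_pos' (k : ℕ) : (0:ℝ) < (k:ℝ) + 1 := by positivity

lemma one_le_cast' (k : ℕ) : (1:ℝ) ≤ (k:ℝ) + 1 := by
  have : (0:ℝ) ≤ (k:ℝ) := Nat.cast_nonneg k
  linarith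

lemma factor_pos {d : ℝ} (hd1 : d < 1) (k : ℕ) : 0 < 1 - d / ((k:ℝ) + 1) := by
  have h1 : d / ((k:ℝ) + 1) < 1 := by
    rw [div_lt_one (cast_pos' k)]
    linarith [one_le_cast' k]
  linarith

lemma factor_le_one {d : ℝ} (hd0 : 0 < d) (k : ℕ) : 1 - d / ((k:ℝ) + 1) ≤ 1 := by
  have : 0 < d / ((k:ℝ) + 1) := by positivity
  linarith

lemma Q_pos {d : ℝ} (hd1 : d < 1) (m : ℕ) : 0 < Q d m :=
  Finset.prod_pos fun k _ => factor_pos hd1 k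

lemma Q_le_one {d : ℝ} (hd0 : 0 < d) (hd1 : d < 1) (m : ℕ) : Q d m ≤ 1 := by
  induction m with
  | zero => simp [Q]
  | succ n ih =>
    rw [Q_succ]
    nlinarith [Q_pos hd1 n, factor_le_one hd0 n, factor_pos hd1 n]

lemma Q_ge_aux {d : ℝ} (hd0 : 0 < d) (hd1 : d < 1) (m : ℕ) :
    (1 - d) / ((m:ℝ) + 1) ≤ Q d (m + 1) := by
  induction m with
  | zero => simp [Q]
  | succ n ih =>
    have hc := cast_pos' n
    have hfp : (0:ℝ) < 1 - d / ((n:ℝ) + 1 + 1) := by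
      have := factor_pos hd1 (n + 1); push_cast at this; linarith
    have key : (1 - d) / ((n:ℝ) + 1 + 1) ≤ ((1 - d) / ((n:ℝ) + 1)) * (1 - d / ((n:ℝ) + 1 + 1)) := by
      have hf : 1 - d / ((n:ℝ) + 1 + 1) = ((n:ℝ) + 2 - d) / ((n:ℝ) + 2) := by
        field_simp; ring
      rw [hf, div_mul_div_comm, div_le_div_iff₀ (by linarith) (by nlinarith)]
      nlinarith [mul_nonneg (mul_nonneg (sub_nonneg.2 hd1.le) (sub_nonneg.2 hd1.le)) (le_of_lt (show (0:ℝ) < (n:ℝ) + 2 by linarith))]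
    rw [Q_succ]
    push_cast
    exact key.trans (mul_le_mul_of_nonneg_right ih hfp.le)

lemma Q_ge {d : ℝ} (hd0 : 0 < d) (hd1 : d < 1) (m : ℕ) :
    (1 - d) / ((m:ℝ) + 1) ≤ Q d m := by
  cases m with
  | zero =>
    simp [Q]
    have : (1 - d) / (1:ℝ) ≤ 1 := by rw [div_one]; linarith
    simpa using this
  | succ n =>
    refine le_trans ?_ (Q_ge_aux hd0 hd1 n)
    push_cast
    apply div_le_div_of_nonneg_left (by linarith) (cast_pos' n) <;> linarith

lemma harmonic_ge_log (m : ℕ) :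
    Real.log ((m:ℝ) + 1) ≤ ∑ k ∈ Finset.range m, 1 / ((k:ℝ) + 1) := by
  induction m with
  | zero => simp
  | succ n ih =>
    rw [Finset.sum_range_succ]
    have hn := cast_pos' n
    have h1 : Real.log ((n:ℝ) + 1 + 1) - Real.log ((n:ℝ) + 1) ≤ 1 / ((n:ℝ) + 1) := by
      rw [← Real.log_div (by linarith) (by linarith)]
      have := Real.log_le_sub_one_of_pos (x := ((n:ℝ) + 1 + 1) / ((n:ℝ) + 1)) (by positivity)
      have h2 : ((n:ℝ) + 1 + 1) / ((n:ℝ) + 1) - 1 = 1 / ((n:ℝ) + 1) := by field_simp; ring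
      linarith
    push_cast
    linarith

lemma Q_le_exp {d : ℝ} (hd0 : 0 < d) (hd1 : d < 1) (m : ℕ) :
    Q d m ≤ Real.exp (-(d * ∑ k ∈ Finset.range m, 1 / ((k:ℝ) + 1))) := by
  induction m with
  | zero => simp [Q]
  | succ n ih =>
    rw [Q_succ, Finset.sum_range_succ]
    have h1 : 1 - d / ((n:ℝ) + 1) ≤ Real.exp (-(d / ((n:ℝ) + 1))) := by
      have := Real.add_one_le_exp (-(d / ((n:ℝ) + 1)))
      linarith
    calc Q d n * (1 - d / ((n:ℝ) + 1))
        ≤ Real.exp (-(d * ∑ k ∈ Finset.range n, 1 / ((k:ℝ) + 1))) * Real.exp (-(d / ((n:ℝ) + 1))) :=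
          mul_le_mul ih h1 (factor_pos hd1 n).le (Real.exp_nonneg _)
      _ = Real.exp (-(d * (∑ k ∈ Finset.range n, 1 / ((k:ℝ) + 1) + 1 / ((n:ℝ) + 1)))) := by
          rw [← Real.exp_add]; congr 1; ring

lemma Q_le_rpow {d : ℝ} (hd0 : 0 < d) (hd1 : d < 1) (m : ℕ) :
    Q d m ≤ ((m:ℝ) + 1) ^ (-d) := by
  refine (Q_le_exp hd0 hd1 m).trans ?_
  rw [Real.rpow_def_of_pos (cast_pos' m)]
  apply Real.exp_le_exp.2
  have := harmonic_ge_log m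
  nlinarith


lemma prod_cast (n : ℕ) : ∏ i ∈ Finset.range n, ((i:ℝ) + 1) = (n.factorial : ℝ) := by
  induction n with
  | zero => simp
  | succ k ih => rw [Finset.prod_range_succ, ih, Nat.factorial_succ]; push_cast; ring

lemma pi_succ (d : ℝ) (n : ℕ) : figarchPi d (n + 1) = d / ((n:ℝ) + 1) * Q d n := by
  have h : ∀ i ∈ Finset.range n, ((i:ℝ) + 1 - d) = ((i:ℝ) + 1) * (1 - d / ((i:ℝ) + 1)) := by
    intro i _
    have := cast_pos' i
    field_simp
  have hfac : (n.factorial : ℝ) ≠ 0 := by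
    exact_mod_cast n.factorial_ne_zero
  unfold figarchPi
  rw [Nat.add_sub_cancel, Finset.prod_congr rfl h, Finset.prod_mul_distrib, prod_cast,
    Nat.factorial_succ]
  unfold Q
  push_cast
  field_simp

variable {d : ℝ}

lemma pi_pos (hd0 : 0 < d) (hd1 : d < 1) (n : ℕ) : 0 < figarchPi d (n + 1) := by
  rw [pi_succ]
  exact mul_pos (div_pos hd0 (cast_pos' n)) (Q_pos hd1 n)

lemma pi_le_d (hd0 : 0 < d) (hd1 : d < 1) (n : ℕ) : figarchPi d (n + 1) ≤ d := by
  rw [pi_succ]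
  have h1 : d / ((n:ℝ) + 1) ≤ d := by
    rw [div_le_iff₀ (cast_pos' n)]
    nlinarith [one_le_cast' n]
  calc d / ((n:ℝ) + 1) * Q d n ≤ d / ((n:ℝ) + 1) * 1 :=
        mul_le_mul_of_nonneg_left (Q_le_one hd0 hd1 n) (by positivity)
    _ ≤ d := by rw [mul_one]; exact h1

lemma pi_lt_one (hd0 : 0 < d) (hd1 : d < 1) (n : ℕ) : figarchPi d (n + 1) < 1 :=
  lt_of_le_of_lt (pi_le_d hd0 hd1 n) hd1

lemma pi_le_rpow (hd0 : 0 < d) (hd1 : d < 1) (n : ℕ) :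
    figarchPi d (n + 1) ≤ ((n:ℝ) + 1) ^ (-(1 + d)) := by
  rw [pi_succ]
  have h1 : d / ((n:ℝ) + 1) ≤ ((n:ℝ) + 1) ^ (-1 : ℝ) := by
    rw [Real.rpow_neg_one, ← one_div]
    exact (div_le_div_iff_of_pos_right (cast_pos' n)).2 hd1.le
  calc d / ((n:ℝ) + 1) * Q d n
      ≤ ((n:ℝ) + 1) ^ (-1 : ℝ) * ((n:ℝ) + 1) ^ (-d) :=
        mul_le_mul h1 (Q_le_rpow hd0 hd1 n) (Q_pos hd1 n).le (by positivity)
    _ = ((n:ℝ) + 1) ^ (-(1 + d)) := by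
        rw [← Real.rpow_add (cast_pos' n)]
        congr 1
        ring

lemma pi_ge (hd0 : 0 < d) (hd1 : d < 1) (n : ℕ) :
    d * (1 - d) / ((n:ℝ) + 1) ^ 2 ≤ figarchPi d (n + 1) := by
  rw [pi_succ]
  have h := Q_ge hd0 hd1 n
  have hc := cast_pos' n
  calc d * (1 - d) / ((n:ℝ) + 1) ^ 2 = d / ((n:ℝ) + 1) * ((1 - d) / ((n:ℝ) + 1)) := by
        rw [div_mul_div_comm, sq]
    _ ≤ d / ((n:ℝ) + 1) * Q d n := mul_le_mul_of_nonneg_left h (by positivity)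


lemma pi_telescope (d : ℝ) (n : ℕ) : figarchPi d (n + 1) = Q d n - Q d (n + 1) := by
  rw [pi_succ, Q_succ]; ring

lemma hasSum_pi (hd0 : 0 < d) (hd1 : d < 1) : HasSum (fun n => figarchPi d (n + 1)) 1 := by
  rw [hasSum_iff_tendsto_nat_of_nonneg (fun n => (pi_pos hd0 hd1 n).le)]
  have hsum : ∀ n, ∑ i ∈ Finset.range n, figarchPi d (i + 1) = 1 - Q d n := by
    intro n
    have : ∀ i ∈ Finset.range n, figarchPi d (i + 1) = Q d i - Q d (i + 1) :=
      fun i _ => pi_telescope d i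
    rw [Finset.sum_congr rfl this, Finset.sum_range_sub' (Q d)]
    simp [Q]
  simp only [hsum]
  have hQ0 : Tendsto (fun n => Q d n) atTop (nhds 0) := by
    have hb : Tendsto (fun n : ℕ => ((n:ℝ) + 1) ^ (-d)) atTop (nhds 0) := by
      apply (tendsto_rpow_neg_atTop hd0).comp
      exact tendsto_atTop_add_const_right atTop 1 tendsto_natCast_atTop_atTop
    exact squeeze_zero (fun n => (Q_pos hd1 n).le) (fun n => Q_le_rpow hd0 hd1 n) hb
  simpa using tendsto_const_nhds.sub hQ0

lemma summable_shift {q : ℝ} (hq : 1 < q) : Summable (fun n : ℕ => ((n:ℝ) + 1) ^ (-q)) := by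
  have h1 : Summable (fun n : ℕ => (n:ℝ) ^ (-q)) := Real.summable_nat_rpow.2 (by linarith)
  have h2 := (summable_nat_add_iff 1).2 h1
  simpa using h2

lemma summable_pi_rpow (hd0 : 0 < d) (hd1 : d < 1) {p : ℝ} (hp0 : 0 < p)
    (hpq : 1 < (1 + d) * p) : Summable (fun n : ℕ => figarchPi d (n + 1) ^ p) := by
  refine Summable.of_nonneg_of_le (fun n => Real.rpow_nonneg (pi_pos hd0 hd1 n).le p)
    (fun n => ?_) (summable_shift hpq)
  calc figarchPi d (n + 1) ^ p ≤ (((n:ℝ) + 1) ^ (-(1 + d))) ^ p :=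
        Real.rpow_le_rpow (pi_pos hd0 hd1 n).le (pi_le_rpow hd0 hd1 n) hp0.le
    _ = ((n:ℝ) + 1) ^ (-((1 + d) * p)) := by
        rw [← Real.rpow_mul (cast_pos' n).le, neg_mul]


lemma log_bound (hd0 : 0 < d) (hd1 : d < 1) (n : ℕ) :
    |Real.log (figarchPi d (n + 1))| ≤
      2 * Real.log ((n:ℝ) + 1) + (-Real.log d - Real.log (1 - d)) := by
  have hpos := pi_pos hd0 hd1 n
  have hneg : Real.log (figarchPi d (n + 1)) < 0 :=
    Real.log_neg hpos (pi_lt_one hd0 hd1 n)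
  rw [abs_of_neg hneg]
  have hlow : 0 < d * (1 - d) / ((n:ℝ) + 1) ^ 2 :=
    div_pos (mul_pos hd0 (by linarith)) (by positivity)
  have h2 : Real.log (d * (1 - d) / ((n:ℝ) + 1) ^ 2) ≤ Real.log (figarchPi d (n + 1)) :=
    Real.log_le_log hlow (pi_ge hd0 hd1 n)
  have h3 : Real.log (d * (1 - d) / ((n:ℝ) + 1) ^ 2)
      = Real.log d + Real.log (1 - d) - 2 * Real.log ((n:ℝ) + 1) := by
    rw [Real.log_div (mul_pos hd0 (by linarith : (0:ℝ) < 1 - d)).ne' (by positivity),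
      Real.log_mul hd0.ne' (by linarith), Real.log_pow]
    push_cast
    ring
  linarith

lemma summable_pi_log (hd0 : 0 < d) (hd1 : d < 1) :
    Summable (fun n : ℕ => figarchPi d (n + 1) * Real.log (figarchPi d (n + 1))) := by
  set C : ℝ := -Real.log d - Real.log (1 - d) with hC
  have hC0 : 0 ≤ C := by
    have h1 : Real.log d < 0 := Real.log_neg hd0 hd1
    have h2 : Real.log (1 - d) ≤ 0 := Real.log_nonpos (by linarith) (by linarith)
    simp only [hC]
    linarith
  rw [← summable_abs_iff]
  refine Summable.of_nonneg_of_le (fun n => abs_nonneg _) (fun n => ?_)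
    (((summable_shift (q := 1 + d / 2) (by linarith))).mul_left (4 / d + C))
  have hpos := pi_pos hd0 hd1 n
  rw [abs_mul, abs_of_pos hpos]
  have hone : (1:ℝ) ≤ ((n:ℝ) + 1) ^ (d / 2) := by
    have := Real.rpow_le_rpow_of_exponent_le (one_le_cast' n) (show (0:ℝ) ≤ d / 2 by linarith)
    simpa using this
  have hlog2 : 2 * Real.log ((n:ℝ) + 1) ≤ 4 / d * ((n:ℝ) + 1) ^ (d / 2) := by
    have hlog : Real.log ((n:ℝ) + 1) ≤ ((n:ℝ) + 1) ^ (d / 2) / (d / 2) :=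
      Real.log_le_rpow_div (by positivity) (by linarith)
    have he : ((n:ℝ) + 1) ^ (d / 2) / (d / 2) = 2 / d * ((n:ℝ) + 1) ^ (d / 2) := by
      field_simp
    rw [he] at hlog
    have h4 : 4 / d * ((n:ℝ) + 1) ^ (d / 2) = 2 * (2 / d * ((n:ℝ) + 1) ^ (d / 2)) := by ring
    rw [h4]
    linarith
  calc figarchPi d (n + 1) * |Real.log (figarchPi d (n + 1))|
      ≤ ((n:ℝ) + 1) ^ (-(1 + d)) * (2 * Real.log ((n:ℝ) + 1) + C) :=
        mul_le_mul (pi_le_rpow hd0 hd1 n) (log_bound hd0 hd1 n) (abs_nonneg _) (by positivity)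
    _ ≤ ((n:ℝ) + 1) ^ (-(1 + d)) * ((4 / d + C) * ((n:ℝ) + 1) ^ (d / 2)) := by
        refine mul_le_mul_of_nonneg_left ?_ (by positivity)
        have : C = C * 1 := by ring
        nlinarith [mul_le_mul_of_nonneg_left hone hC0]
    _ = (4 / d + C) * ((n:ℝ) + 1) ^ (-(1 + d / 2)) := by
        rw [mul_comm, mul_assoc, ← Real.rpow_add (cast_pos' n)]
        congr 2
        ring


lemma jensen (hd0 : 0 < d) (hd1 : d < 1) {p : ℝ} (hp0 : 0 < p) (hp1 : p < 1)
    (hpq : 1 < (1 + d) * p) :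
    (p - 1) * (∑' n : ℕ, figarchPi d (n + 1) * Real.log (figarchPi d (n + 1)))
      ≤ Real.log (∑' n : ℕ, figarchPi d (n + 1) ^ p) := by
  set f : ℕ → ℝ := fun n => figarchPi d (n + 1) with hf
  set L : ℝ := ∑' n, f n * Real.log (f n) with hL
  set T : ℝ := ∑' n, f n ^ p with hT
  have hS1 : HasSum f 1 := hasSum_pi hd0 hd1
  have hSL : HasSum (fun n => f n * Real.log (f n)) L := (summable_pi_log hd0 hd1).hasSum
  have hSP : HasSum (fun n => f n ^ p) T := (summable_pi_rpow hd0 hd1 hp0 hpq).hasSum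
  have hterm : ∀ n, f n + (p - 1) * (f n * Real.log (f n) - L * f n)
      ≤ f n ^ p * Real.exp ((1 - p) * L) := by
    intro n
    have hpos : 0 < f n := pi_pos hd0 hd1 n
    have hrw : f n ^ p * Real.exp ((1 - p) * L)
        = f n * Real.exp ((p - 1) * (Real.log (f n) - L)) := by
      conv_rhs => rw [← Real.exp_log hpos]
      rw [Real.rpow_def_of_pos hpos, ← Real.exp_add, ← Real.exp_add]
      congr 1
      simp only [Real.log_exp]
      ring
    have h1 : 1 + (p - 1) * (Real.log (f n) - L)
        ≤ Real.exp ((p - 1) * (Real.log (f n) - L)) := by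
      have := Real.add_one_le_exp ((p - 1) * (Real.log (f n) - L))
      linarith
    have h2 : f n + (p - 1) * (f n * Real.log (f n) - L * f n)
        = f n * (1 + (p - 1) * (Real.log (f n) - L)) := by ring
    rw [h2, hrw]
    exact mul_le_mul_of_nonneg_left h1 hpos.le
  have hlhs : HasSum (fun n => f n + (p - 1) * (f n * Real.log (f n) - L * f n)) 1 := by
    have h := hS1.add ((hSL.sub (hS1.mul_left L)).mul_left (p - 1))
    simpa using h
  have hrhs : HasSum (fun n => f n ^ p * Real.exp ((1 - p) * L))
      (T * Real.exp ((1 - p) * L)) := hSP.mul_right _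
  have hle : 1 ≤ T * Real.exp ((1 - p) * L) := hasSum_le hterm hlhs hrhs
  have he : Real.exp ((p - 1) * L) * Real.exp ((1 - p) * L) = 1 := by
    rw [← Real.exp_add]
    have : (p - 1) * L + (1 - p) * L = 0 := by ring
    rw [this, Real.exp_zero]
  have hTexp : Real.exp ((p - 1) * L) ≤ T := by
    nlinarith [Real.exp_pos ((1 - p) * L), Real.exp_pos ((p - 1) * L)]
  have hTpos : 0 < T := lt_of_lt_of_le (Real.exp_pos _) hTexp
  exact (Real.le_log_iff_exp_le hTpos).2 hTexp

lemma pnat_tsum (h : ℕ+ → ℝ) : ∑' j : ℕ+, h j = ∑' n : ℕ, h (Nat.succPNat n) := by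
  exact (Equiv.pnatEquivNat.symm.tsum_eq h).symm

lemma pnat_summable (h : ℕ+ → ℝ) :
    Summable (fun n : ℕ => h (Nat.succPNat n)) → Summable h := by
  intro hs
  exact (Equiv.pnatEquivNat.symm.summable_iff).1 hs

lemma coe_succPNat (n : ℕ) : ((Nat.succPNat n : ℕ+) : ℕ) = n + 1 := rfl

lemma part1 (hd0 : 0 < d) (hd1 : d < 1) :
    Summable (fun j : ℕ+ => figarchPi d j * Real.log (figarchPi d j)) ∧
      ∀ p : ℝ, 1 / (d + 1) < p → p < 1 →
        0 ≤ -(∑' j : ℕ+, figarchPi d j * Real.log (figarchPi d j)) ∧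
        -(∑' j : ℕ+, figarchPi d j * Real.log (figarchPi d j))
          ≤ Real.log (∑' j : ℕ+, figarchPi d j ^ p) / (1 - p) := by
  have hsum : Summable (fun j : ℕ+ => figarchPi d (j : ℕ) * Real.log (figarchPi d (j : ℕ))) := by
    apply pnat_summable
    simpa [coe_succPNat] using summable_pi_log hd0 hd1
  refine ⟨hsum, fun p hp1 hp2 => ?_⟩
  have hp0 : 0 < p := lt_trans (by positivity) hp1
  have hpq : 1 < (1 + d) * p := by
    rw [div_lt_iff₀ (by linarith)] at hp1
    nlinarith
  have hL : (∑' j : ℕ+, figarchPi d (j : ℕ) * Real.log (figarchPi d (j : ℕ)))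
      = ∑' n : ℕ, figarchPi d (n + 1) * Real.log (figarchPi d (n + 1)) := by
    rw [pnat_tsum]
    exact tsum_congr fun n => by rw [coe_succPNat]
  have hTsum : (∑' j : ℕ+, figarchPi d (j : ℕ) ^ p) = ∑' n : ℕ, figarchPi d (n + 1) ^ p := by
    rw [pnat_tsum]
    exact tsum_congr fun n => by rw [coe_succPNat]
  rw [hL, hTsum]
  constructor
  · rw [neg_nonneg]
    apply tsum_nonpos
    intro n
    have hpos := pi_pos hd0 hd1 n
    exact mul_nonpos_of_nonneg_of_nonpos hpos.le
      (Real.log_nonpos hpos.le (pi_lt_one hd0 hd1 n).le)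
  · rw [le_div_iff₀ (by linarith : (0:ℝ) < 1 - p)]
    have hj := jensen hd0 hd1 hp0 hp2 hpq
    nlinarith [hj]


lemma pi_one (n : ℕ) : figarchPi 1 (n + 1) = if n = 0 then 1 else 0 := by
  cases n with
  | zero => simp [figarchPi]
  | succ m =>
    simp only [figarchPi, Nat.add_sub_cancel]
    have h0 : (∏ i ∈ Finset.range (m + 1), ((i:ℝ) + 1 - 1)) = 0 :=
      Finset.prod_eq_zero (Finset.mem_range.2 (Nat.succ_pos m)) (by norm_num)
    rw [h0]
    simp

lemma continuous_pi (n : ℕ) : Continuous (fun d : ℝ => figarchPi d (n + 1)) := by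
  unfold figarchPi
  fun_prop

lemma tendsto_T :
    Tendsto (fun d : ℝ => ∑' n : ℕ, figarchPi d (n + 1) ^ (3/4 : ℝ))
      (nhdsWithin 1 (Set.Iio 1)) (nhds 1) := by
  have key := tendsto_tsum_of_dominated_convergence
    (𝓕 := nhdsWithin 1 (Set.Iio 1))
    (f := fun (d : ℝ) (n : ℕ) => figarchPi d (n + 1) ^ (3/4 : ℝ))
    (g := fun n : ℕ => figarchPi 1 (n + 1) ^ (3/4 : ℝ))
    (bound := fun n : ℕ => ((n:ℝ) + 1) ^ (-(9/8 : ℝ)))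
    (summable_shift (by norm_num)) ?_ ?_
  · have hg : (∑' n : ℕ, figarchPi 1 (n + 1) ^ (3/4 : ℝ)) = 1 := by
      have hcongr : ∀ n : ℕ, figarchPi 1 (n + 1) ^ (3/4:ℝ) = if n = 0 then 1 else 0 := by
        intro n
        rw [pi_one]
        split
        · simp
        · simp [Real.zero_rpow (by norm_num : (3/4:ℝ) ≠ 0)]
      rw [tsum_congr hcongr, tsum_eq_single 0 (by intro b hb; simp [hb])]
      simp
    rwa [hg] at key
  · intro n
    have hc : Continuous fun d : ℝ => figarchPi d (n + 1) := continuous_pi n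
    have h2 : ContinuousAt (fun x : ℝ => x ^ (3/4:ℝ)) (figarchPi 1 (n + 1)) :=
      Real.continuousAt_rpow_const _ _ (Or.inr (by norm_num))
    have h1 : Tendsto (fun d : ℝ => figarchPi d (n + 1)) (nhdsWithin 1 (Set.Iio 1))
        (nhds (figarchPi 1 (n + 1))) :=
      (hc.tendsto 1).mono_left nhdsWithin_le_nhds
    exact Filter.Tendsto.comp h2 h1
  · filter_upwards [Ioo_mem_nhdsLT (by norm_num : (1/2:ℝ) < 1)] with d hd n
    obtain ⟨hd2, hd1⟩ := hd
    have hd0 : (0:ℝ) < d := by linarith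
    have hpos := pi_pos hd0 hd1 n
    rw [Real.norm_eq_abs, abs_of_nonneg (Real.rpow_nonneg hpos.le _)]
    calc figarchPi d (n + 1) ^ (3/4:ℝ)
        ≤ (((n:ℝ) + 1) ^ (-(3/2:ℝ))) ^ (3/4:ℝ) := by
          apply Real.rpow_le_rpow hpos.le ?_ (by norm_num)
          refine (pi_le_rpow hd0 hd1 n).trans ?_
          exact Real.rpow_le_rpow_of_exponent_le (one_le_cast' n) (by linarith)
      _ = ((n:ℝ) + 1) ^ (-(9/8:ℝ)) := by
          rw [← Real.rpow_mul (cast_pos' n).le]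
          norm_num

end FigAux


/-- For `d ∈ (0,1)` and `p ∈ (1/(d+1), 1)`, the entropy `L(d) = Σ_{j≥1} π_j(d) log π_j(d)`
is well defined and satisfies `0 ≤ −L(d) ≤ H(p,d)/(1−p)`; consequently `L(d) → 0` as
`d → 1⁻`. -/
theorem figarch_L_bound :
    (∀ d : ℝ, 0 < d → d < 1 →
      Summable (fun j : ℕ+ => figarchPi d j * Real.log (figarchPi d j)) ∧
      ∀ p : ℝ, 1 / (d + 1) < p → p < 1 →
        0 ≤ -(∑' j : ℕ+, figarchPi d j * Real.log (figarchPi d j)) ∧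
        -(∑' j : ℕ+, figarchPi d j * Real.log (figarchPi d j))
          ≤ Real.log (∑' j : ℕ+, figarchPi d j ^ p) / (1 - p)) ∧
    Tendsto (fun d : ℝ => ∑' j : ℕ+, figarchPi d j * Real.log (figarchPi d j))
      (nhdsWithin 1 (Set.Iio 1)) (nhds 0) := by
  refine ⟨fun d hd0 hd1 => FigAux.part1 hd0 hd1, ?_⟩
  have hupper : Tendsto
      (fun d : ℝ => Real.log (∑' n : ℕ, figarchPi d (n + 1) ^ (3/4:ℝ)) / (1 - 3/4))
      (nhdsWithin 1 (Set.Iio 1)) (nhds 0) := by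
    have hlog : Tendsto
        (fun d : ℝ => Real.log (∑' n : ℕ, figarchPi d (n + 1) ^ (3/4:ℝ)))
        (nhdsWithin 1 (Set.Iio 1)) (nhds (Real.log 1)) :=
      ((Real.continuousAt_log one_ne_zero).tendsto).comp FigAux.tendsto_T
    have := hlog.div_const (1 - 3/4)
    simpa using this
  have hsq : Tendsto
      (fun d : ℝ => -(∑' j : ℕ+, figarchPi d j * Real.log (figarchPi d j)))
      (nhdsWithin 1 (Set.Iio 1)) (nhds 0) := by
    apply tendsto_of_tendsto_of_tendsto_of_le_of_le' tendsto_const_nhds hupper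
    · filter_upwards [Ioo_mem_nhdsLT (by norm_num : (1/2:ℝ) < 1)] with d hd
      obtain ⟨hd2, hd1⟩ := hd
      have hd0 : (0:ℝ) < d := by linarith
      have h34 : 1 / (d + 1) < (3/4:ℝ) := by
        rw [div_lt_iff₀ (by linarith)]
        linarith
      exact ((FigAux.part1 hd0 hd1).2 (3/4) h34 (by norm_num)).1
    · filter_upwards [Ioo_mem_nhdsLT (by norm_num : (1/2:ℝ) < 1)] with d hd
      obtain ⟨hd2, hd1⟩ := hd
      have hd0 : (0:ℝ) < d := by linarith
      have h34 : 1 / (d + 1) < (3/4:ℝ) := by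
        rw [div_lt_iff₀ (by linarith)]
        linarith
      have h := ((FigAux.part1 hd0 hd1).2 (3/4) h34 (by norm_num)).2
      have heq : (∑' j : ℕ+, figarchPi d (j:ℕ) ^ (3/4:ℝ))
          = ∑' n : ℕ, figarchPi d (n + 1) ^ (3/4:ℝ) := by
        rw [FigAux.pnat_tsum]
        exact tsum_congr fun n => by rw [FigAux.coe_succPNat]
      rwa [heq] at h
  have := hsq.neg
  simpa using this

end
end
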